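/- arXiv:1502.04342 — 9 statements merged into one kernel-verified Lean document; each statement's English description precedes it below -/
import Mathlib

section
/- Let n ≥ r ≥ 2 and let A be an n×n complex matrix with all entries of absolute value at most 1. If A is r-partite (i.e., there is a partition of the index set [n] into r sets N_1,...,N_r such that all entries of A with both indices in the same part N_i are zero), then the sum of the singular values of A is at most n^(3/2) · sqrt(1 - 1/r). -/
/-!
By Cauchy–Schwarz, `(∑ σᵢ)² ≤ n ∑ σᵢ²`, and `∑ σᵢ² = tr (A Aᴴ) = ∑ |aᵢⱼ|²`. For an `r`-partite
matrix with entries bounded by `1` this is at most the number of pairs `(i, j)` in different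
parts, namely `n² - ∑ₖ |Nₖ|² ≤ n² - n²/r`, again by Cauchy–Schwarz.
-/

open Matrix BigOperators

/-- The singular values of a square matrix `A` over an `RCLike` field: the square roots of the
eigenvalues of the Hermitian matrix `A * Aᴴ`. -/
noncomputable def singularValues {𝕜 : Type*} [RCLike 𝕜] {m : Type*} [Fintype m] [DecidableEq m]
    (A : Matrix m m 𝕜) : m → ℝ :=
  fun i => Real.sqrt ((Matrix.isHermitian_mul_conjTranspose_self A).eigenvalues i)

/-- The trace norm (nuclear norm) of a square matrix: the sum of its singular values. -/
noncomputable def traceNorm {𝕜 : Type*} [RCLike 𝕜] {m : Type*} [Fintype m] [DecidableEq m]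
    (A : Matrix m m 𝕜) : ℝ :=
  ∑ i, singularValues A i

open Finset

section TraceNorm

variable {𝕜 m : Type*} [RCLike 𝕜] [Fintype m] [DecidableEq m]

theorem sum_eigenvalues_mul_conjTranspose_self (A : Matrix m m 𝕜) :
    ∑ i, (isHermitian_mul_conjTranspose_self A).eigenvalues i = ∑ i, ∑ j, ‖A i j‖ ^ 2 := by
  apply RCLike.ofReal_injective (K := 𝕜)
  push_cast
  rw [← (isHermitian_mul_conjTranspose_self A).trace_eq_sum_eigenvalues]
  simp only [trace, Matrix.diag, mul_apply, conjTranspose_apply, RCLike.star_def, RCLike.mul_conj]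

theorem sq_singularValues (A : Matrix m m 𝕜) (i : m) :
    singularValues A i ^ 2 = (isHermitian_mul_conjTranspose_self A).eigenvalues i :=
  Real.sq_sqrt (eigenvalues_self_mul_conjTranspose_nonneg A i)

theorem traceNorm_sq_le_card_mul_sum_norm_sq (A : Matrix m m 𝕜) :
    traceNorm A ^ 2 ≤ Fintype.card m * ∑ i, ∑ j, ‖A i j‖ ^ 2 := by
  rw [← sum_eigenvalues_mul_conjTranspose_self, ← Finset.card_univ]
  simpa only [traceNorm, sq_singularValues] using
    sq_sum_le_card_mul_sum_sq (s := univ) (f := singularValues A)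

end TraceNorm

theorem sq_card_le_card_mul_sum_ite_eq {α β : Type*} [Fintype α] [Fintype β] [DecidableEq β]
    (p : α → β) :
    Fintype.card α ^ 2 ≤ Fintype.card β * ∑ i, ∑ j, if p i = p j then 1 else 0 := by
  set c : β → ℕ := fun k => #{i | p i = k}
  have hcard : Fintype.card α = ∑ k, c k :=
    card_eq_sum_card_fiberwise fun i _ => mem_univ (p i)
  have hpairs : ∑ i, ∑ j, (if p i = p j then 1 else 0) = ∑ k, c k ^ 2 := calc
    ∑ i, ∑ j, (if p i = p j then 1 else 0) = ∑ i, c (p i) := by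
      simp only [sum_boole, c, eq_comm, Nat.cast_id]
    _ = ∑ k, ∑ i with p i = k, c (p i) := (sum_fiberwise _ _ _).symm
    _ = ∑ k, c k ^ 2 := sum_congr rfl fun k _ => by
      rw [sum_congr rfl fun i hi => by rw [(mem_filter.mp hi).2], sum_const, smul_eq_mul, sq]
  rw [hcard, hpairs, ← Finset.card_univ]
  exact sq_sum_le_card_mul_sum_sq

theorem sum_norm_sq_le_of_partite {𝕜 m β : Type*} [RCLike 𝕜] [Fintype m] [Fintype β]
    [DecidableEq β] (A : Matrix m m 𝕜) (hbd : ∀ i j, ‖A i j‖ ≤ 1) (p : m → β)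
    (hpart : ∀ i j, p i = p j → A i j = 0) :
    ∑ i, ∑ j, ‖A i j‖ ^ 2 ≤ Fintype.card m ^ 2 * (1 - 1 / Fintype.card β) := by
  have hentry (i j : m) : ‖A i j‖ ^ 2 ≤ 1 - if p i = p j then 1 else 0 := by
    split_ifs with h
    · simp [hpart i j h]
    · simpa using hbd i j
  have hsame : (Fintype.card m : ℝ) ^ 2 / Fintype.card β ≤
      ∑ i, ∑ j, if p i = p j then (1 : ℝ) else 0 := by
    refine div_le_of_le_mul₀ (by positivity) (by positivity) ?_
    rw [mul_comm]
    exact_mod_cast sq_card_le_card_mul_sum_ite_eq p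
  calc ∑ i, ∑ j, ‖A i j‖ ^ 2 ≤ ∑ i : m, ∑ j : m, (1 - if p i = p j then (1 : ℝ) else 0) :=
        sum_le_sum fun i _ => sum_le_sum fun j _ => hentry i j
    _ = Fintype.card m ^ 2 - ∑ i, ∑ j, if p i = p j then (1 : ℝ) else 0 := by
        simp [sum_sub_distrib, sq]
    _ ≤ Fintype.card m ^ 2 * (1 - 1 / Fintype.card β) := by
        rw [mul_one_sub, mul_one_div]
        linarith

theorem trace_norm_r_partite_matrix_le_general {n r : ℕ}
    (A : Matrix (Fin n) (Fin n) ℂ)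
    (hbd : ∀ i j, ‖A i j‖ ≤ 1)
    (p : Fin n → Fin r)
    (hpart : ∀ i j, p i = p j → A i j = 0) :
    traceNorm A ≤ (n : ℝ) ^ (3 / 2 : ℝ) * Real.sqrt (1 - 1 / r) := by
  have hfrob := sum_norm_sq_le_of_partite A hbd p hpart
  simp only [Fintype.card_fin] at hfrob
  calc traceNorm A ≤ √(n * (n ^ 2 * (1 - 1 / r))) := by
        refine Real.le_sqrt_of_sq_le ((traceNorm_sq_le_card_mul_sum_norm_sq A).trans ?_)
        rw [Fintype.card_fin]
        gcongr
    _ = (n : ℝ) ^ (3 / 2 : ℝ) * √(1 - 1 / r) := by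
        rw [← mul_assoc, ← pow_succ', Real.sqrt_mul (by positivity), Real.sqrt_eq_rpow,
          ← Real.rpow_natCast, ← Real.rpow_mul (Nat.cast_nonneg n)]
        norm_num

/-- if `n ≥ r ≥ 2` and `A` is an `n × n` complex `r`-partite matrix with all
entries of absolute value at most `1`, then `‖A‖_* ≤ n^(3/2) √(1 - 1/r)`. -/
theorem trace_norm_r_partite_matrix_le {n r : ℕ} (hr : 2 ≤ r) (hn : r ≤ n)
    (A : Matrix (Fin n) (Fin n) ℂ)
    (hbd : ∀ i j, ‖A i j‖ ≤ 1)
    (p : Fin n → Fin r)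
    (hpart : ∀ i j, p i = p j → A i j = 0) :
    traceNorm A ≤ (n : ℝ) ^ (3 / 2 : ℝ) * Real.sqrt (1 - 1 / r) :=
  trace_norm_r_partite_matrix_le_general A hbd p hpart
end

section
/- Let n ≥ r ≥ 2 and let A be an n×n complex r-partite matrix with all entries of absolute value at most 1. If the trace norm of A equals n^(3/2) · sqrt(1 - 1/r), then all n singular values of A are equal to sqrt((1 - 1/r)·n). -/
open Matrix BigOperators Kronecker

/-!
By Cauchy–Schwarz, `‖A‖_tr = ∑ σᵢ ≤ √n · (∑ σᵢ²)^{1/2}`, and `∑ σᵢ² = ∑ᵢⱼ |Aᵢⱼ|²` is the squared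
Frobenius norm. For an `r`-partite matrix with entries bounded by `1`, the latter is at most the
number of ordered pairs `(i, j)` lying in different parts, which is at most `n² (1 - 1/r)` by a
second application of Cauchy–Schwarz to the part sizes. Hence `‖A‖_tr ≤ n^{3/2} √(1 - 1/r)`, and
equality in the first Cauchy–Schwarz forces all `σᵢ` to be equal to their mean.
-/

open Finset

open scoped ComplexOrder in
lemma sum_sq_singularValues {𝕜 : Type*} [RCLike 𝕜] {m : Type*} [Fintype m] [DecidableEq m]
    (A : Matrix m m 𝕜) : ∑ i, singularValues A i ^ 2 = ∑ i, ∑ j, ‖A i j‖ ^ 2 := by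
  have hA := isHermitian_mul_conjTranspose_self A
  have htrace : (A * Aᴴ).trace = ((∑ i, ∑ j, ‖A i j‖ ^ 2 : ℝ) : 𝕜) := by
    simp only [trace, diag_apply, mul_apply, conjTranspose_apply, RCLike.star_def, RCLike.mul_conj]
    push_cast
    rfl
  have hsq : ∀ i, singularValues A i ^ 2 = hA.eigenvalues i := fun i =>
    Real.sq_sqrt ((posSemidef_self_mul_conjTranspose A).eigenvalues_nonneg i)
  rw [Fintype.sum_congr _ _ hsq]
  apply RCLike.ofReal_injective (K := 𝕜)
  rw [← htrace, hA.trace_eq_sum_eigenvalues]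
  push_cast
  rfl

section Partition

variable {ι κ : Type*} [Fintype ι] [Fintype κ] [DecidableEq κ] (p : ι → κ)

lemma sum_sum_ite_eq_eq_sum_sq_card_fiber :
    ∑ i, ∑ j, (if p i = p j then 1 else 0 : ℝ) = ∑ k, (#{i | p i = k} : ℝ) ^ 2 := by
  have hrow : ∀ i, ∑ j, (if p i = p j then 1 else 0 : ℝ) = #{j | p j = p i} := fun i => by
    simp only [sum_boole, eq_comm]
  simp only [hrow, ← Finset.sum_fiberwise' univ p fun k => (#{j | p j = k} : ℝ), sum_const,
    nsmul_eq_mul, sq]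

lemma sq_card_div_card_le_sum_sum_ite_eq :
    (Fintype.card ι : ℝ) ^ 2 / Fintype.card κ ≤ ∑ i, ∑ j, (if p i = p j then 1 else 0 : ℝ) := by
  have hsizes : ∑ k, (#{i | p i = k} : ℝ) = Fintype.card ι := by
    exact_mod_cast Finset.card_eq_sum_card_fiberwise (f := p) (fun _ _ => mem_univ _) |>.symm
  rw [sum_sum_ite_eq_eq_sum_sq_card_fiber]
  refine div_le_of_le_mul₀ (Nat.cast_nonneg _) (sum_nonneg fun _ _ => sq_nonneg _) ?_
  rw [mul_comm]
  simpa [hsizes] using sq_sum_le_card_mul_sum_sq (s := univ) (f := fun k => (#{i | p i = k} : ℝ))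

lemma sum_sum_sq_norm_le_of_eq_zero_on_parts {E : Type*} [SeminormedAddGroup E]
    (A : ι → ι → E) (hbd : ∀ i j, ‖A i j‖ ≤ 1) (hpart : ∀ i j, p i = p j → A i j = 0) :
    ∑ i, ∑ j, ‖A i j‖ ^ 2 ≤ (Fintype.card ι : ℝ) ^ 2 * (1 - 1 / Fintype.card κ) := by
  have hentry : ∀ i j, ‖A i j‖ ^ 2 ≤ 1 - (if p i = p j then 1 else 0 : ℝ) := fun i j => by
    split_ifs with h
    · simp [hpart i j h]
    · simpa using hbd i j
  calc ∑ i, ∑ j, ‖A i j‖ ^ 2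
      ≤ ∑ i, ∑ j, (1 - (if p i = p j then 1 else 0 : ℝ)) :=
        sum_le_sum fun i _ => sum_le_sum fun j _ => hentry i j
    _ = (Fintype.card ι : ℝ) ^ 2 - ∑ i, ∑ j, (if p i = p j then 1 else 0 : ℝ) := by
        simp only [sum_sub_distrib, sum_const, card_univ, nsmul_eq_mul, mul_one]
        ring
    _ ≤ (Fintype.card ι : ℝ) ^ 2 * (1 - 1 / Fintype.card κ) := by
        have := sq_card_div_card_le_sum_sum_ite_eq p
        rw [mul_one_sub, mul_one_div]
        linarith

end Partition

/-- Equality case of `(∑ xᵢ)² ≤ n ∑ xᵢ²`: expand `∑ (xᵢ - μ)² ≤ 0`. -/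
lemma eq_of_sum_eq_card_mul_of_sum_sq_le {ι : Type*} [Fintype ι] {x : ι → ℝ} {μ : ℝ}
    (hsum : ∑ i, x i = Fintype.card ι * μ) (hsq : ∑ i, x i ^ 2 ≤ Fintype.card ι * μ ^ 2) (i : ι) :
    x i = μ := by
  have hdev : ∑ j, (x j - μ) ^ 2 ≤ 0 := by
    have hexpand : ∑ j, (x j - μ) ^ 2
        = ∑ j, x j ^ 2 - 2 * μ * ∑ j, x j + Fintype.card ι * μ ^ 2 := by
      simp only [sub_sq, sum_add_distrib, sum_sub_distrib, ← sum_mul, ← mul_sum, sum_const,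
        card_univ, nsmul_eq_mul]
      ring
    rw [hexpand, hsum]
    linarith
  have hzero := (sum_eq_zero_iff_of_nonneg fun j _ => sq_nonneg (x j - μ)).mp
    (le_antisymm hdev (sum_nonneg fun j _ => sq_nonneg _)) i (mem_univ i)
  exact sub_eq_zero.mp (pow_eq_zero_iff two_ne_zero |>.mp hzero)

theorem singularValues_of_traceNorm_eq_general {n r : ℕ}
    (A : Matrix (Fin n) (Fin n) ℂ)
    (hbd : ∀ i j, ‖A i j‖ ≤ 1)
    (p : Fin n → Fin r)
    (hpart : ∀ i j, p i = p j → A i j = 0)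
    (heq : traceNorm A = (n : ℝ) ^ (3 / 2 : ℝ) * Real.sqrt (1 - 1 / r)) :
    ∀ i, singularValues A i = Real.sqrt ((1 - 1 / r) * n) := by
  set μ := Real.sqrt ((1 - 1 / r) * n)
  have hμsq : μ ^ 2 = (1 - 1 / r) * n := by
    have hr : (1 : ℝ) / r ≤ 1 := by simpa using Nat.cast_inv_le_one (α := ℝ) r
    exact Real.sq_sqrt (mul_nonneg (sub_nonneg.mpr hr) n.cast_nonneg)
  have hsum : ∑ i, singularValues A i = n * μ := by
    have hpow : (n : ℝ) ^ (3 / 2 : ℝ) = n * Real.sqrt n := by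
      rw [Real.sqrt_eq_rpow, ← Real.rpow_one_add' (Nat.cast_nonneg n) (by norm_num)]
      norm_num
    simp only [μ]
    rw [← traceNorm, heq, hpow, Real.sqrt_mul' _ (Nat.cast_nonneg n)]
    ring
  refine eq_of_sum_eq_card_mul_of_sum_sq_le (by simpa using hsum) ?_
  calc ∑ i, singularValues A i ^ 2 = ∑ i, ∑ j, ‖A i j‖ ^ 2 := sum_sq_singularValues A
    _ ≤ (n : ℝ) ^ 2 * (1 - 1 / r) := by
        simpa using sum_sum_sq_norm_le_of_eq_zero_on_parts p A hbd hpart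
    _ = Fintype.card (Fin n) * μ ^ 2 := by
        rw [hμsq, Fintype.card_fin]
        ring

/-- equality case of the trace-norm bound: all singular values equal
`√((1 - 1/r) n)`. -/
theorem singularValues_of_traceNorm_eq {n r : ℕ} (hr : 2 ≤ r) (hn : r ≤ n)
    (A : Matrix (Fin n) (Fin n) ℂ)
    (hbd : ∀ i j, ‖A i j‖ ≤ 1)
    (p : Fin n → Fin r)
    (hpart : ∀ i j, p i = p j → A i j = 0)
    (heq : traceNorm A = (n : ℝ) ^ (3 / 2 : ℝ) * Real.sqrt (1 - 1 / r)) :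
    ∀ i, singularValues A i = Real.sqrt ((1 - 1 / r) * n) :=
  singularValues_of_traceNorm_eq_general A hbd p hpart heq
end

section
/- Let n ≥ r ≥ 2 and let A be an n×n nonnegative real matrix with all entries at most 1. If A is r-partite, then the trace norm of A is at most (n^(3/2)/2)·sqrt(1 - 1/r) + (1 - 1/r)·n. -/
/-!
Write `A = M + K / 2`, where `K` is the adjacency matrix of the complete `r`-partite graph
whose parts are the fibres of `p`. The entries of `M` vanish inside the parts and lie in
`[-1/2, 1/2]` outside them, so `‖M‖_F² ≤ (n² - ∑ nₖ²) / 4 ≤ (1 - 1/r) n² / 4`. The quadratic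
form of `K` is `(∑ zᵢ)² - ∑ₖ (∑_{p i = k} zᵢ)²`: it is at most `(1 - 1/r) n` on unit vectors
and nonpositive on the hyperplane `∑ zᵢ = 0`, so `K` has at most one positive eigenvalue, of
size at most `(1 - 1/r) n`; as `tr K = 0`, the absolute values of its eigenvalues sum to at
most `2 (1 - 1/r) n`. Finally the singular value decomposition gives a unitary `W` with
`‖A‖_* = tr (W A)`, and for unitary `W` one has `re tr (W M) ≤ √n ‖M‖_F` (Cauchy–Schwarz)
and `re tr (W K) ≤ ∑ |λᵢ(K)|` for Hermitian `K`.
-/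

open Matrix BigOperators Kronecker

open Finset

variable {𝕜 : Type*} [RCLike 𝕜] {N : Type*}

section Unitary

variable [Fintype N] [DecidableEq N]

lemma eq_sum_norm_sq_of_mul_conjTranspose_eq_diagonal {B : Matrix N N 𝕜} {d : N → ℝ}
    (h : B * Bᴴ = diagonal fun i => (d i : 𝕜)) (i : N) : d i = ∑ a, ‖B i a‖ ^ 2 := by
  have := congrFun (congrFun h i) i
  simp only [mul_apply, conjTranspose_apply, diagonal_apply_eq, RCLike.star_def,
    RCLike.mul_conj] at this
  exact_mod_cast this.symm

lemma orthonormal_of_mul_conjTranspose_eq_diagonal {B : Matrix N N 𝕜} {d : N → ℝ}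
    (h : B * Bᴴ = diagonal fun i => (d i : 𝕜)) :
    Orthonormal 𝕜 ({i | d i ≠ 0}.domRestrict
      fun i => ((√(d i) : 𝕜))⁻¹ • (WithLp.toLp 2 (B i) : EuclideanSpace 𝕜 N)) := by
  rw [orthonormal_iff_ite]
  rintro ⟨i, hi⟩ ⟨j, hj⟩
  have hBB : ∑ a, B j a * star (B i a) = if j = i then (d j : 𝕜) else 0 := by
    simpa [Matrix.mul_apply, diagonal_apply] using congrFun (congrFun h j) i
  calc _ = (√(d j) : 𝕜)⁻¹ * (√(d i) : 𝕜)⁻¹ * ∑ a, B j a * star (B i a) := by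
        simp only [Set.domRestrict_apply, EuclideanSpace.inner_eq_star_dotProduct, dotProduct,
          mul_sum]
        simp
        exact sum_congr rfl fun _ _ => by ring
    _ = if (⟨i, hi⟩ : {i | d i ≠ 0}) = ⟨j, hj⟩ then 1 else 0 := by
        rw [hBB]
        by_cases hij : i = j
        · subst hij
          have hd : 0 ≤ d i :=
            eq_sum_norm_sq_of_mul_conjTranspose_eq_diagonal h i ▸ by positivity
          have : ((√(d i) : ℝ) : 𝕜) ^ 2 = d i := by exact_mod_cast Real.sq_sqrt hd
          have hσ : (√(d i) : 𝕜) ≠ 0 := by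
            exact_mod_cast (Real.sqrt_pos.mpr (hd.lt_of_ne' hi)).ne'
          simp only [↓reduceIte]
          field_simp
          exact this.symm
        · simp [hij, Ne.symm hij]

/-- The rows of `V` are the normalised nonzero rows of `B`, completed to an orthonormal basis. -/
lemma exists_mem_unitaryGroup_eq_diagonal_mul {B : Matrix N N 𝕜} {d : N → ℝ}
    (h : B * Bᴴ = diagonal fun i => (d i : 𝕜)) :
    ∃ V ∈ unitaryGroup N 𝕜, B = diagonal (fun i => (√(d i) : 𝕜)) * V := by
  have hd := eq_sum_norm_sq_of_mul_conjTranspose_eq_diagonal h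
  obtain ⟨b, hb⟩ := (orthonormal_of_mul_conjTranspose_eq_diagonal h)
    |>.exists_orthonormalBasis_extension_of_card_eq (by simp)
  refine ⟨of fun i a => b i a, ?_, ?_⟩
  · rw [mem_unitaryGroup_iff]
    ext i j
    have := orthonormal_iff_ite.mp b.orthonormal j i
    simp [Matrix.mul_apply, EuclideanSpace.inner_eq_star_dotProduct, dotProduct] at this ⊢
    simp [this, one_apply, eq_comm]
  · ext i a
    rw [diagonal_mul]
    by_cases hi : d i = 0
    · have hrow := hi
      rw [hd i, sum_eq_zero_iff_of_nonneg fun _ _ => by positivity] at hrow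
      simpa [hi] using hrow a (mem_univ a)
    · have hσ : (√(d i) : 𝕜) ≠ 0 := by
        have : 0 < d i := (hd i ▸ by positivity : 0 ≤ d i).lt_of_ne' hi
        exact_mod_cast (Real.sqrt_pos.mpr this).ne'
      simp [hb i hi, hσ]

lemma exists_mem_unitaryGroup_trace_mul_eq_traceNorm (A : Matrix N N 𝕜) :
    ∃ W ∈ unitaryGroup N 𝕜, (W * A).trace = traceNorm A := by
  set hAA := isHermitian_mul_conjTranspose_self A
  set U : Matrix N N 𝕜 := (hAA.eigenvectorUnitary : Matrix N N 𝕜)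
  have hB : (star U * A) * (star U * A)ᴴ = diagonal fun i => (hAA.eigenvalues i : 𝕜) := by
    have := hAA.conjStarAlgAut_star_eigenvectorUnitary
    rw [Unitary.conjStarAlgAut_star_apply] at this
    convert this using 1
    · simp [U, Matrix.mul_assoc, star_eq_conjTranspose]
    · rfl
  obtain ⟨V, hV, hBV⟩ := exists_mem_unitaryGroup_eq_diagonal_mul hB
  refine ⟨star V * star U, mul_mem (Unitary.star_mem hV) (Unitary.star_mem (by simp [U])), ?_⟩
  rw [Matrix.mul_assoc, hBV, trace_mul_comm, Matrix.mul_assoc, mem_unitaryGroup_iff.mp hV,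
    Matrix.mul_one, trace_diagonal]
  simp [traceNorm, singularValues]

lemma sum_norm_sq_eq_one_of_mem_unitaryGroup {W : Matrix N N 𝕜} (hW : W ∈ unitaryGroup N 𝕜)
    (i : N) : ∑ j, ‖W i j‖ ^ 2 = 1 := by
  have := congrFun (congrFun (mem_unitaryGroup_iff.mp hW) i) i
  simp only [mul_apply, star_apply, one_apply_eq, RCLike.star_def, RCLike.mul_conj] at this
  exact_mod_cast this

lemma re_trace_mul_le_sqrt_card_mul {W : Matrix N N 𝕜} (hW : W ∈ unitaryGroup N 𝕜)
    (M : Matrix N N 𝕜) :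
    RCLike.re (W * M).trace ≤ √(Fintype.card N) * √(∑ i, ∑ j, ‖M i j‖ ^ 2) := by
  have hW2 : ∑ q : N × N, ‖W q.1 q.2‖ ^ 2 = Fintype.card N := by
    simp [Fintype.sum_prod_type, sum_norm_sq_eq_one_of_mem_unitaryGroup hW]
  have hM2 : ∑ q : N × N, ‖M q.2 q.1‖ ^ 2 = ∑ i, ∑ j, ‖M i j‖ ^ 2 := by
    rw [Fintype.sum_prod_type, sum_comm]
  calc RCLike.re (W * M).trace
      ≤ ‖(W * M).trace‖ := RCLike.re_le_norm _
    _ = ‖∑ q : N × N, W q.1 q.2 * M q.2 q.1‖ := by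
        simp [trace, mul_apply, Fintype.sum_prod_type]
    _ ≤ ∑ q : N × N, ‖W q.1 q.2‖ * ‖M q.2 q.1‖ := by
        simpa only [norm_mul] using norm_sum_le univ fun q : N × N => W q.1 q.2 * M q.2 q.1
    _ ≤ √(∑ q : N × N, ‖W q.1 q.2‖ ^ 2) * √(∑ q : N × N, ‖M q.2 q.1‖ ^ 2) :=
        Real.sum_mul_le_sqrt_mul_sqrt _ _ _
    _ = √(Fintype.card N) * √(∑ i, ∑ j, ‖M i j‖ ^ 2) := by rw [hW2, hM2]

lemma Matrix.IsHermitian.re_trace_mul_le_sum_abs_eigenvalues {K W : Matrix N N 𝕜}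
    (hK : K.IsHermitian) (hW : W ∈ unitaryGroup N 𝕜) :
    RCLike.re (W * K).trace ≤ ∑ i, |hK.eigenvalues i| := by
  set Q : Matrix N N 𝕜 := (hK.eigenvectorUnitary : Matrix N N 𝕜)
  have hQ : Q ∈ unitaryGroup N 𝕜 := hK.eigenvectorUnitary.2
  have hWQ : star Q * W * Q ∈ unitaryGroup N 𝕜 := mul_mem (mul_mem (Unitary.star_mem hQ) hW) hQ
  have hK' : K = Q * diagonal (RCLike.ofReal ∘ hK.eigenvalues) * star Q := by
    simpa [Unitary.conjStarAlgAut_apply] using hK.spectral_theorem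
  calc RCLike.re (W * K).trace
      = RCLike.re (star Q * W * Q * diagonal (RCLike.ofReal ∘ hK.eigenvalues)).trace := by
        conv_lhs => rw [hK', ← Matrix.mul_assoc, trace_mul_comm]
        simp only [Matrix.mul_assoc]
    _ = ∑ i, RCLike.re ((star Q * W * Q) i i * hK.eigenvalues i) := by
        simp [trace, mul_diagonal]
    _ ≤ ∑ i, ‖(star Q * W * Q) i i‖ * |hK.eigenvalues i| := by
        gcongr with i
        exact (RCLike.re_le_norm _).trans (by simp [norm_mul])
    _ ≤ ∑ i, |hK.eigenvalues i| := by
        gcongr with i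
        exact mul_le_of_le_one_left (abs_nonneg _) (entry_norm_bound_of_unitary hWQ i i)

lemma traceNorm_le_sqrt_card_mul_add_mul_sum_abs_eigenvalues (A : Matrix N N 𝕜)
    {K : Matrix N N 𝕜} (hK : K.IsHermitian) {t : ℝ} (ht : 0 ≤ t) :
    traceNorm A ≤ √(Fintype.card N) * √(∑ i, ∑ j, ‖(A - t • K) i j‖ ^ 2)
      + t * ∑ i, |hK.eigenvalues i| := by
  obtain ⟨W, hW, hWA⟩ := exists_mem_unitaryGroup_trace_mul_eq_traceNorm A
  have hsplit :
      traceNorm A = RCLike.re (W * (A - t • K)).trace + t * RCLike.re (W * K).trace := by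
    rw [← RCLike.ofReal_re (K := 𝕜) (traceNorm A), ← hWA, Matrix.mul_sub, trace_sub,
      Matrix.mul_smul, trace_smul, map_sub, RCLike.smul_re]
    ring
  rw [hsplit]
  gcongr
  · exact re_trace_mul_le_sqrt_card_mul hW _
  · exact hK.re_trace_mul_le_sum_abs_eigenvalues hW

end Unitary

section CompleteMultipartite

variable {ι : Type*} [DecidableEq ι] (p : N → ι)

def completeMultipartiteMatrix : Matrix N N ℝ :=
  of fun i j => if p i = p j then 0 else 1

lemma isHermitian_completeMultipartiteMatrix : (completeMultipartiteMatrix p).IsHermitian := by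
  ext i j
  simp [completeMultipartiteMatrix, eq_comm]

lemma trace_completeMultipartiteMatrix [Fintype N] : (completeMultipartiteMatrix p).trace = 0 := by
  simp [completeMultipartiteMatrix, trace]

lemma dotProduct_completeMultipartiteMatrix_mulVec [Fintype N] [Fintype ι] (z : N → ℝ) :
    z ⬝ᵥ (completeMultipartiteMatrix p *ᵥ z)
      = (∑ i, z i) ^ 2 - ∑ k, (∑ i with p i = k, z i) ^ 2 := by
  have hfib :
      ∑ k, (∑ i with p i = k, z i) ^ 2 = ∑ i, ∑ j, if p i = p j then z i * z j else 0 := by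
    simp_rw [sq, sum_mul_sum, sum_filter]
    rw [sum_comm]
    simp [eq_comm]
  rw [hfib, sq, sum_mul_sum, ← sum_sub_distrib]
  simp only [dotProduct, mulVec, completeMultipartiteMatrix, of_apply, mul_sum, ← sum_sub_distrib]
  refine sum_congr rfl fun i _ => sum_congr rfl fun j _ => ?_
  split_ifs <;> ring

lemma dotProduct_completeMultipartiteMatrix_mulVec_le [Fintype N] [Fintype ι] (z : N → ℝ) :
    z ⬝ᵥ (completeMultipartiteMatrix p *ᵥ z)
      ≤ (1 - 1 / Fintype.card ι) * (∑ i, z i) ^ 2 := by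
  have hparts : (∑ i, z i) ^ 2 / Fintype.card ι ≤ ∑ k, (∑ i with p i = k, z i) ^ 2 := by
    refine div_le_of_le_mul₀ (by positivity) (by positivity) ?_
    rw [← sum_fiberwise univ p z, mul_comm]
    exact sq_sum_le_card_mul_sum_sq
  rw [dotProduct_completeMultipartiteMatrix_mulVec, sub_mul, one_mul, one_div_mul_eq_div]
  linarith

lemma dotProduct_completeMultipartiteMatrix_mulVec_nonpos [Fintype N] [Fintype ι] {z : N → ℝ}
    (hz : ∑ i, z i = 0) : z ⬝ᵥ (completeMultipartiteMatrix p *ᵥ z) ≤ 0 := by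
  rw [dotProduct_completeMultipartiteMatrix_mulVec, hz]
  have : 0 ≤ ∑ k, (∑ i with p i = k, z i) ^ 2 := by positivity
  linarith

lemma sum_sq_sub_half_completeMultipartiteMatrix_le [Fintype N] [Fintype ι] {A : Matrix N N ℝ}
    (hnn : ∀ i j, 0 ≤ A i j) (hbd : ∀ i j, A i j ≤ 1)
    (hpart : ∀ i j, p i = p j → A i j = 0) :
    ∑ i, ∑ j, ‖(A - (1 / 2 : ℝ) • completeMultipartiteMatrix p) i j‖ ^ 2
      ≤ (1 - 1 / Fintype.card ι) * Fintype.card N ^ 2 / 4 := by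
  have hentry (i j : N) : ‖(A - (1 / 2 : ℝ) • completeMultipartiteMatrix p) i j‖ ^ 2
      ≤ completeMultipartiteMatrix p i j / 4 := by
    by_cases h : p i = p j
    · simp [completeMultipartiteMatrix, h, hpart i j h]
    · simp only [completeMultipartiteMatrix, Matrix.sub_apply, Matrix.smul_apply, of_apply,
        if_neg h, smul_eq_mul, Real.norm_eq_abs, sq_abs]
      nlinarith [hnn i j, hbd i j]
  have hsum : ∑ i, ∑ j, completeMultipartiteMatrix p i j
      ≤ (1 - 1 / Fintype.card ι) * Fintype.card N ^ 2 := by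
    simpa [dotProduct, mulVec] using dotProduct_completeMultipartiteMatrix_mulVec_le p fun _ => 1
  calc _ ≤ ∑ i, ∑ j, completeMultipartiteMatrix p i j / 4 := by
        gcongr with i _ j _
        exact hentry i j
    _ = (∑ i, ∑ j, completeMultipartiteMatrix p i j) / 4 := by simp only [sum_div]
    _ ≤ _ := by linarith

end CompleteMultipartite

lemma sum_abs_le_two_mul_of_sum_eq_zero [Fintype N] {f : N → ℝ} {b : ℝ} (hb : 0 ≤ b)
    (hsum : ∑ i, f i = 0) (hle : ∀ i, f i ≤ b)
    (hpos : ∀ i j, 0 < f i → 0 < f j → i = j) :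
    ∑ i, |f i| ≤ 2 * b := by
  have hcard : #{i | 0 < f i} ≤ 1 :=
    card_le_one.mpr fun i hi j hj => hpos i j (mem_filter.1 hi).2 (mem_filter.1 hj).2
  have hpos_sum : ∑ i with 0 < f i, f i ≤ b :=
    calc ∑ i with 0 < f i, f i
        ≤ #{i | 0 < f i} • b := sum_le_card_nsmul _ _ _ fun i _ => hle i
      _ ≤ b := by rw [nsmul_eq_mul]; exact mul_le_of_le_one_left hb (by exact_mod_cast hcard)
  have hsplit (g : N → ℝ) : ∑ i, g i = ∑ i with 0 < f i, g i + ∑ i with ¬0 < f i, g i :=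
    (sum_filter_add_sum_filter_not _ _ _).symm
  have habs : ∑ i, |f i| = ∑ i with 0 < f i, f i - ∑ i with ¬0 < f i, f i := by
    rw [hsplit, sum_congr rfl fun i hi => abs_of_pos (mem_filter.1 hi).2,
      sum_congr rfl fun i hi => abs_of_nonpos (not_lt.1 (mem_filter.1 hi).2), sum_neg_distrib,
      sub_eq_add_neg]
  rw [hsplit] at hsum
  linarith

section RealSpectrum

variable [Fintype N] [DecidableEq N] {K : Matrix N N ℝ}

lemma Matrix.IsHermitian.eigenvectorBasis_dotProduct (hK : K.IsHermitian) (i j : N) :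
    ⇑(hK.eigenvectorBasis i) ⬝ᵥ ⇑(hK.eigenvectorBasis j) = if i = j then 1 else 0 := by
  rw [← orthonormal_iff_ite.mp hK.eigenvectorBasis.orthonormal i j,
    EuclideanSpace.inner_eq_star_dotProduct, dotProduct_comm]
  simp

lemma Matrix.IsHermitian.eigenvectorBasis_dotProduct_mulVec (hK : K.IsHermitian) (i j : N) :
    ⇑(hK.eigenvectorBasis i) ⬝ᵥ (K *ᵥ ⇑(hK.eigenvectorBasis j))
      = if i = j then hK.eigenvalues i else 0 := by
  rw [hK.mulVec_eigenvectorBasis, dotProduct_smul, hK.eigenvectorBasis_dotProduct]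
  split_ifs with h <;> simp [h]

lemma Matrix.IsHermitian.eq_of_eigenvalues_pos (hK : K.IsHermitian) (c : N → ℝ)
    (hneg : ∀ z, c ⬝ᵥ z = 0 → z ⬝ᵥ (K *ᵥ z) ≤ 0) {i j : N}
    (hi : 0 < hK.eigenvalues i) (hj : 0 < hK.eigenvalues j) : i = j := by
  by_contra hij
  have hxx := hK.eigenvectorBasis_dotProduct_mulVec i i
  have hyy := hK.eigenvectorBasis_dotProduct_mulVec j j
  have hxy := hK.eigenvectorBasis_dotProduct_mulVec i j
  have hyx := hK.eigenvectorBasis_dotProduct_mulVec j i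
  simp only [if_pos, if_neg hij, if_neg (Ne.symm hij)] at hxx hyy hxy hyx
  set x := ⇑(hK.eigenvectorBasis i)
  set y := ⇑(hK.eigenvectorBasis j)
  by_cases hcx : c ⬝ᵥ x = 0
  · linarith [hneg x hcx]
  set z := (c ⬝ᵥ y) • x - (c ⬝ᵥ x) • y
  have hcz : c ⬝ᵥ z = 0 := by
    simp only [z, dotProduct_sub, dotProduct_smul, smul_eq_mul]
    ring
  have hzKz : z ⬝ᵥ (K *ᵥ z)
      = (c ⬝ᵥ y) ^ 2 * hK.eigenvalues i + (c ⬝ᵥ x) ^ 2 * hK.eigenvalues j := by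
    simp only [z, mulVec_sub, mulVec_smul, dotProduct_sub, sub_dotProduct, dotProduct_smul,
      smul_dotProduct, hxx, hyy, hxy, hyx, smul_eq_mul]
    ring
  have : 0 < (c ⬝ᵥ x) ^ 2 * hK.eigenvalues j := by positivity
  nlinarith [hneg z hcz, sq_nonneg (c ⬝ᵥ y)]

end RealSpectrum

section CompleteMultipartiteSpectrum

variable [Fintype N] [DecidableEq N] {ι : Type*} [Fintype ι] [DecidableEq ι] (p : N → ι)

lemma eigenvalues_completeMultipartiteMatrix_le (i : N) :
    (isHermitian_completeMultipartiteMatrix p).eigenvalues i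
      ≤ (1 - 1 / Fintype.card ι) * Fintype.card N := by
  set hK := isHermitian_completeMultipartiteMatrix p
  set x := ⇑(hK.eigenvectorBasis i)
  have hx : ∑ a, x a ^ 2 = 1 := by
    simpa [dotProduct, sq] using hK.eigenvectorBasis_dotProduct i i
  have hrayleigh : hK.eigenvalues i = x ⬝ᵥ (completeMultipartiteMatrix p *ᵥ x) := by
    simpa using (hK.eigenvectorBasis_dotProduct_mulVec i i).symm
  calc hK.eigenvalues i
      ≤ (1 - 1 / Fintype.card ι) * (∑ a, x a) ^ 2 :=
        hrayleigh ▸ dotProduct_completeMultipartiteMatrix_mulVec_le p x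
    _ ≤ (1 - 1 / Fintype.card ι) * Fintype.card N := by
        gcongr
        · exact Nat.one_sub_one_div_cast_nonneg _
        · simpa [hx] using sq_sum_le_card_mul_sum_sq (s := univ) (f := x)

lemma sum_abs_eigenvalues_completeMultipartiteMatrix_le :
    ∑ i, |(isHermitian_completeMultipartiteMatrix p).eigenvalues i|
      ≤ 2 * ((1 - 1 / Fintype.card ι) * Fintype.card N) := by
  set hK := isHermitian_completeMultipartiteMatrix p
  refine sum_abs_le_two_mul_of_sum_eq_zero
    (mul_nonneg (Nat.one_sub_one_div_cast_nonneg _) (Nat.cast_nonneg _)) ?_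
    (eigenvalues_completeMultipartiteMatrix_le p) fun i j => ?_
  · simpa using (hK.trace_eq_sum_eigenvalues).symm.trans (trace_completeMultipartiteMatrix p)
  · refine hK.eq_of_eigenvalues_pos (fun _ => 1) fun z hz => ?_
    exact dotProduct_completeMultipartiteMatrix_mulVec_nonpos p (by simpa [dotProduct] using hz)

end CompleteMultipartiteSpectrum

theorem traceNorm_nonneg_r_partite_le_general {n r : ℕ}
    (A : Matrix (Fin n) (Fin n) ℝ)
    (hnn : ∀ i j, 0 ≤ A i j) (hbd : ∀ i j, A i j ≤ 1)
    (p : Fin n → Fin r)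
    (hpart : ∀ i j, p i = p j → A i j = 0) :
    traceNorm A ≤ (n : ℝ) ^ (3 / 2 : ℝ) / 2 * Real.sqrt (1 - 1 / r) + (1 - 1 / r) * n := by
  set K := completeMultipartiteMatrix p
  set c : ℝ := 1 - 1 / r
  have hfrob : ∑ i, ∑ j, ‖(A - (1 / 2 : ℝ) • K) i j‖ ^ 2 ≤ c * n ^ 2 / 4 := by
    simpa only [Fintype.card_fin] using
      sum_sq_sub_half_completeMultipartiteMatrix_le p hnn hbd hpart
  have hspec := sum_abs_eigenvalues_completeMultipartiteMatrix_le p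
  simp only [Fintype.card_fin] at hspec
  have hsqrt : √(c * n ^ 2 / 4) = √c * n / 2 := by
    rw [show c * n ^ 2 / 4 = c * (n / 2) ^ 2 by ring, Real.sqrt_mul' _ (by positivity),
      Real.sqrt_sq (by positivity)]
    ring
  have hpow : (n : ℝ) ^ (3 / 2 : ℝ) = √n * n := by
    rw [show (3 / 2 : ℝ) = 1 / 2 + 1 by norm_num, Real.rpow_add' (by positivity) (by norm_num),
      Real.rpow_one, Real.sqrt_eq_rpow]
  calc traceNorm A
      ≤ √n * √(∑ i, ∑ j, ‖(A - (1 / 2 : ℝ) • K) i j‖ ^ 2)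
        + 1 / 2 * ∑ i, |(isHermitian_completeMultipartiteMatrix p).eigenvalues i| := by
        simpa using traceNorm_le_sqrt_card_mul_add_mul_sum_abs_eigenvalues A
          (isHermitian_completeMultipartiteMatrix p) (t := 1 / 2) (by norm_num)
    _ ≤ √n * √(c * n ^ 2 / 4) + 1 / 2 * (2 * (c * n)) := by gcongr
    _ = (n : ℝ) ^ (3 / 2 : ℝ) / 2 * √c + c * n := by rw [hsqrt, hpow]; ring

/-- if `n ≥ r ≥ 2` and `A` is an `n × n` nonnegative real `r`-partite matrix with
all entries at most `1`, then `‖A‖_* ≤ (n^(3/2)/2) √(1 - 1/r) + (1 - 1/r) n`. -/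
theorem traceNorm_nonneg_r_partite_le {n r : ℕ} (hr : 2 ≤ r) (hn : r ≤ n)
    (A : Matrix (Fin n) (Fin n) ℝ)
    (hnn : ∀ i j, 0 ≤ A i j) (hbd : ∀ i j, A i j ≤ 1)
    (p : Fin n → Fin r)
    (hpart : ∀ i j, p i = p j → A i j = 0) :
    traceNorm A ≤ (n : ℝ) ^ (3 / 2 : ℝ) / 2 * Real.sqrt (1 - 1 / r) + (1 - 1 / r) * n :=
  traceNorm_nonneg_r_partite_le_general A hnn hbd p hpart
end

section
/- Let n ≥ r ≥ 2 and let G be an r-partite simple graph on n vertices. Then the sum of the absolute values of the eigenvalues of the adjacency matrix of G is at most (n^(3/2)/2)·sqrt(1 - 1/r) + (1 - 1/r)·n. -/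
/-
Colour `G` properly with `r` colours and let `H ⊇ G` be the complete `r`-partite graph on the
colour classes. In any orthonormal basis, the diagonal of a symmetric matrix has `ℓ¹`-norm at most
its energy `E`; reading `A_G = (A_G - A_H / 2) + A_H / 2` in an eigenbasis of `A_G` therefore gives
`E(G) ≤ √n ‖A_G - A_H / 2‖_F + E(H) / 2`. The entries of `A_G - A_H / 2` are `±1/2` on the edges
of `H` and `0` elsewhere, so `‖A_G - A_H / 2‖_F² = 2 e(H) / 4 ≤ (1 - 1/r) n² / 4`.
The quadratic form of `A_H` is `(∑ x)² - ∑ₖ (∑_{C i = k} xᵢ)²`: by Cauchy–Schwarz it is at most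
`(1 - 1/r) n ‖x‖²`, and it is nonpositive on `𝟙^⊥`. Hence `A_H` has a single positive eigenvalue,
of size at most `(1 - 1/r) n`, and as its trace vanishes, `E(H) ≤ 2 (1 - 1/r) n`.
-/

open Matrix BigOperators Kronecker

open Finset

namespace Matrix

variable {ι : Type*} [Fintype ι]

lemma sum_sq_apply_eq_trace_mul_star (M : Matrix ι ι ℝ) :
    ∑ i, ∑ j, M i j ^ 2 = trace (M * star M) := by
  simp [trace, mul_apply, sq]

lemma sum_abs_diag_le_sqrt_card_mul_sqrt (M : Matrix ι ι ℝ) :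
    ∑ i, |M i i| ≤ √(Fintype.card ι) * √(∑ i, ∑ j, M i j ^ 2) := by
  have hdiag : ∑ i, |M i i| ^ 2 ≤ ∑ i, ∑ j, M i j ^ 2 :=
    sum_le_sum fun i _ => by
      rw [sq_abs]
      exact single_le_sum (f := fun j => M i j ^ 2) (fun _ _ => sq_nonneg _)
        (mem_univ i)
  calc ∑ i, |M i i| = ∑ i, 1 * |M i i| := by simp
    _ ≤ √(∑ _i : ι, 1 ^ 2) * √(∑ i, |M i i| ^ 2) := Real.sum_mul_le_sqrt_mul_sqrt _ _ _
    _ ≤ √(Fintype.card ι) * √(∑ i, ∑ j, M i j ^ 2) := by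
      simp only [one_pow, sum_const, card_univ, nsmul_eq_mul, mul_one]
      gcongr

variable [DecidableEq ι]

lemma sum_sq_apply_star_mul_mul {U : Matrix ι ι ℝ} (hU : U ∈ unitaryGroup ι ℝ)
    (M : Matrix ι ι ℝ) :
    ∑ i, ∑ j, (star U * M * U) i j ^ 2 = ∑ i, ∑ j, M i j ^ 2 := by
  have h₁ : U * star U = 1 := mem_unitaryGroup_iff.mp hU
  have hconj : star U * M * U * star (star U * M * U) = star U * (M * star M) * U := by
    simp only [star_mul, star_star, Matrix.mul_assoc]
    rw [← Matrix.mul_assoc U, h₁, Matrix.one_mul]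
  rw [sum_sq_apply_eq_trace_mul_star, sum_sq_apply_eq_trace_mul_star, hconj, trace_mul_cycle,
    h₁, Matrix.one_mul]

lemma sum_sq_apply_row_eq_one {U : Matrix ι ι ℝ} (hU : U ∈ unitaryGroup ι ℝ) (j : ι) :
    ∑ i, U j i ^ 2 = 1 := by
  have h := congr_fun₂ (mem_unitaryGroup_iff.mp hU) j j
  simpa [mul_apply, sq] using h

namespace IsHermitian

lemma star_eigenvectorUnitary_mul_mul {A : Matrix ι ι ℝ} (hA : A.IsHermitian) :
    star (hA.eigenvectorUnitary : Matrix ι ι ℝ) * A * hA.eigenvectorUnitary =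
      diagonal hA.eigenvalues := by
  simpa using hA.conjStarAlgAut_star_eigenvectorUnitary

lemma sum_abs_diag_star_mul_mul_le {B : Matrix ι ι ℝ} (hB : B.IsHermitian)
    {U : Matrix ι ι ℝ} (hU : U ∈ unitaryGroup ι ℝ) :
    ∑ i, |(star U * B * U) i i| ≤ ∑ j, |hB.eigenvalues j| := by
  set W : Matrix ι ι ℝ := ↑hB.eigenvectorUnitary
  set R := star W * U
  have hR : R ∈ unitaryGroup ι ℝ :=
    Submonoid.mul_mem _ (Unitary.star_mem hB.eigenvectorUnitary.2) hU
  have hB' : B = W * diagonal hB.eigenvalues * star W := by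
    simpa using hB.spectral_theorem
  have hdiag : ∀ i, (star U * B * U) i i = ∑ j, hB.eigenvalues j * R j i ^ 2 := by
    intro i
    have : star U * B * U = star R * diagonal hB.eigenvalues * R := by
      simp only [R, hB', star_mul, star_star, Matrix.mul_assoc]
    rw [this, mul_apply]
    refine sum_congr rfl fun j _ => ?_
    rw [mul_diagonal, star_apply, star_trivial]
    ring
  calc ∑ i, |(star U * B * U) i i| ≤ ∑ i, ∑ j, |hB.eigenvalues j| * R j i ^ 2 := by
        gcongr with i
        rw [hdiag]
        refine (abs_sum_le_sum_abs _ _).trans_eq (sum_congr rfl fun j _ => ?_)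
        rw [abs_mul, abs_of_nonneg (sq_nonneg (R j i))]
    _ = ∑ j, |hB.eigenvalues j| := by
        rw [sum_comm]
        simp_rw [← mul_sum, sum_sq_apply_row_eq_one hR, mul_one]

theorem sum_abs_eigenvalues_le {A B : Matrix ι ι ℝ} (hA : A.IsHermitian) (hB : B.IsHermitian)
    (c : ℝ) :
    ∑ i, |hA.eigenvalues i| ≤
      √(Fintype.card ι) * √(∑ i, ∑ j, (A - c • B) i j ^ 2) + |c| * ∑ i, |hB.eigenvalues i| := by
  set V : Matrix ι ι ℝ := ↑hA.eigenvectorUnitary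
  have hV : V ∈ unitaryGroup ι ℝ := hA.eigenvectorUnitary.2
  have hsplit : star V * A * V = star V * (A - c • B) * V + c • (star V * B * V) := by
    simp [Matrix.mul_sub, Matrix.sub_mul]
  calc ∑ i, |hA.eigenvalues i| = ∑ i, |(star V * A * V) i i| := by
        simp [V, star_eigenvectorUnitary_mul_mul]
    _ ≤ ∑ i, (|(star V * (A - c • B) * V) i i| + |c| * |(star V * B * V) i i|) := by
        gcongr with i
        rw [hsplit, add_apply, smul_apply, smul_eq_mul, ← abs_mul]
        exact abs_add_le _ _
    _ ≤ √(Fintype.card ι) * √(∑ i, ∑ j, (A - c • B) i j ^ 2) +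
          |c| * ∑ i, |hB.eigenvalues i| := by
        rw [sum_add_distrib, ← mul_sum, ← sum_sq_apply_star_mul_mul hV]
        exact add_le_add (sum_abs_diag_le_sqrt_card_mul_sqrt _)
          (mul_le_mul_of_nonneg_left (hB.sum_abs_diag_star_mul_mul_le hV) (abs_nonneg c))

section TraceZero

variable {B : Matrix ι ι ℝ} (hB : B.IsHermitian)

lemma eigenvalues_eq_dotProduct_mulVec (j : ι) :
    hB.eigenvalues j = ⇑(hB.eigenvectorBasis j) ⬝ᵥ B *ᵥ ⇑(hB.eigenvectorBasis j) := by
  simpa using hB.eigenvalues_eq j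

lemma dotProduct_eigenvectorBasis (j k : ι) :
    ⇑(hB.eigenvectorBasis j) ⬝ᵥ ⇑(hB.eigenvectorBasis k) = if j = k then 1 else 0 := by
  rw [← orthonormal_iff_ite.mp hB.eigenvectorBasis.orthonormal j k, dotProduct_comm]
  simp [EuclideanSpace.inner_eq_star_dotProduct]

lemma eigenvalues_le_of_forall_dotProduct_mulVec_le {c : ℝ}
    (h : ∀ x, x ⬝ᵥ B *ᵥ x ≤ c * (x ⬝ᵥ x)) (j : ι) : hB.eigenvalues j ≤ c := by
  simpa [← eigenvalues_eq_dotProduct_mulVec, dotProduct_eigenvectorBasis] using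
    h (hB.eigenvectorBasis j)

lemma eigenvalues_nonpos_of_forall_dotProduct_mulVec_nonpos {u : ι → ℝ}
    (h : ∀ x, u ⬝ᵥ x = 0 → x ⬝ᵥ B *ᵥ x ≤ 0) {j k : ι} (hjk : j ≠ k)
    (hj : 0 < hB.eigenvalues j) : hB.eigenvalues k ≤ 0 := by
  set w : ι → ι → ℝ := fun i => ⇑(hB.eigenvectorBasis i)
  have hw_ne : ∀ i, 0 < hB.eigenvalues i → u ⬝ᵥ w i ≠ 0 := fun i hi hu => by
    have := h (w i) hu
    rw [← eigenvalues_eq_dotProduct_mulVec] at this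
    linarith
  by_contra! hk
  -- a combination of the two eigenvectors orthogonal to `u` on which the form is positive
  set x := (u ⬝ᵥ w k) • w j - (u ⬝ᵥ w j) • w k
  have hx : u ⬝ᵥ x = 0 := by
    simp only [x, dotProduct_sub, dotProduct_smul, smul_eq_mul]
    ring
  have hform : x ⬝ᵥ B *ᵥ x =
      (u ⬝ᵥ w k) ^ 2 * hB.eigenvalues j + (u ⬝ᵥ w j) ^ 2 * hB.eigenvalues k := by
    simp only [x, w, mulVec_sub, mulVec_smul, mulVec_eigenvectorBasis, sub_dotProduct,
      dotProduct_sub, smul_dotProduct, dotProduct_smul, smul_eq_mul,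
      dotProduct_eigenvectorBasis, hjk, hjk.symm, ↓reduceIte, mul_one, mul_zero]
    ring
  have := h x hx
  rw [hform] at this
  linarith [mul_pos (sq_pos_of_ne_zero (hw_ne k hk)) hj,
    mul_pos (sq_pos_of_ne_zero (hw_ne j hj)) hk]

lemma sum_abs_eigenvalues_eq_two_mul_sum_max (htr : B.trace = 0) :
    ∑ j, |hB.eigenvalues j| = 2 * ∑ j, max (hB.eigenvalues j) 0 := by
  have hsum : ∑ j, hB.eigenvalues j = 0 := by simpa [hB.trace_eq_sum_eigenvalues] using htr
  have habs : ∀ t : ℝ, |t| = 2 * max t 0 - t := fun t => by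
    rcases le_total 0 t with ht | ht
    · rw [abs_of_nonneg ht, max_eq_left ht]; ring
    · rw [abs_of_nonpos ht, max_eq_right ht]; ring
  simp_rw [habs, sum_sub_distrib, ← mul_sum, hsum, sub_zero]

theorem sum_abs_eigenvalues_le_two_mul {u : ι → ℝ} {c : ℝ} (hc : 0 ≤ c) (htr : B.trace = 0)
    (hle : ∀ x, x ⬝ᵥ B *ᵥ x ≤ c * (x ⬝ᵥ x)) (hneg : ∀ x, u ⬝ᵥ x = 0 → x ⬝ᵥ B *ᵥ x ≤ 0) :
    ∑ j, |hB.eigenvalues j| ≤ 2 * c := by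
  rw [hB.sum_abs_eigenvalues_eq_two_mul_sum_max htr]
  gcongr
  by_cases hpos : ∃ j, 0 < hB.eigenvalues j
  · obtain ⟨j, hj⟩ := hpos
    rw [sum_eq_single_of_mem j (mem_univ j) fun k _ hkj =>
      max_eq_right (hB.eigenvalues_nonpos_of_forall_dotProduct_mulVec_nonpos hneg hkj.symm hj)]
    exact max_le (hB.eigenvalues_le_of_forall_dotProduct_mulVec_le hle j) hc
  · push Not at hpos
    simpa [max_eq_right (hpos _)] using hc

end TraceZero

end IsHermitian

end Matrix

lemma one_sub_one_div_natCast_nonneg (m : ℕ) : (0 : ℝ) ≤ 1 - 1 / m := by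
  simpa using Nat.cast_inv_le_one (α := ℝ) m

namespace SimpleGraph

variable {V : Type*} [Fintype V]

lemma sum_sq_adjMatrix_sub_half_smul_adjMatrix {G H : SimpleGraph V} [DecidableRel G.Adj]
    [DecidableRel H.Adj] (hGH : G ≤ H) :
    ∑ i, ∑ j, (G.adjMatrix ℝ - (1 / 2 : ℝ) • H.adjMatrix ℝ) i j ^ 2 =
      1 / 4 * ∑ i, ∑ j, H.adjMatrix ℝ i j := by
  rw [mul_sum]
  refine sum_congr rfl fun i _ => ?_
  rw [mul_sum]
  refine sum_congr rfl fun j _ => ?_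
  by_cases hH : H.Adj i j
  · by_cases hG : G.Adj i j <;> simp [hG, hH] <;> norm_num
  · simp [hH, mt (@hGH i j) hH]

theorem sum_abs_eigenvalues_adjMatrix_le_of_le [DecidableEq V] {G H : SimpleGraph V}
    [DecidableRel G.Adj] [DecidableRel H.Adj] (hGH : G ≤ H) (hA : (G.adjMatrix ℝ).IsHermitian) :
    ∑ i, |hA.eigenvalues i| ≤
      √(Fintype.card V) * √(1 / 4 * ∑ i, ∑ j, H.adjMatrix ℝ i j) +
        1 / 2 * ∑ i, |(H.isHermitian_adjMatrix ℝ).eigenvalues i| := by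
  have h := hA.sum_abs_eigenvalues_le (H.isHermitian_adjMatrix ℝ) (1 / 2)
  rwa [sum_sq_adjMatrix_sub_half_smul_adjMatrix hGH, abs_of_pos one_half_pos] at h

section CompleteMultipartite

variable {κ : Type*} [Fintype κ] [DecidableEq κ] (C : V → κ)

lemma dotProduct_adjMatrix_comap_top_mulVec (x : V → ℝ) :
    x ⬝ᵥ ((⊤ : SimpleGraph κ).comap C).adjMatrix ℝ *ᵥ x =
      (∑ i, x i) ^ 2 - ∑ k, (∑ i with C i = k, x i) ^ 2 := by
  have hrow : ∀ i, (((⊤ : SimpleGraph κ).comap C).adjMatrix ℝ *ᵥ x) i =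
      ∑ j, x j - ∑ j with C j = C i, x j := fun i => by
    rw [adjMatrix_mulVec_apply, eq_sub_iff_add_eq, add_comm,
      ← sum_filter_add_sum_filter_not univ (fun j => C j = C i)]
    congr 1
    apply sum_congr _ fun _ _ => rfl
    ext j
    simp [eq_comm]
  have hfib : ∑ i, x i * ∑ j with C j = C i, x j = ∑ k, (∑ i with C i = k, x i) ^ 2 := by
    rw [← sum_fiberwise univ C]
    refine sum_congr rfl fun k _ => ?_
    rw [sq, sum_mul]
    refine sum_congr rfl fun i hi => ?_
    rw [(mem_filter.mp hi).2]
  simp only [dotProduct, hrow, mul_sub, sum_sub_distrib, ← sum_mul, hfib, sq]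

lemma dotProduct_adjMatrix_comap_top_mulVec_le (x : V → ℝ) :
    x ⬝ᵥ ((⊤ : SimpleGraph κ).comap C).adjMatrix ℝ *ᵥ x ≤
      (1 - 1 / Fintype.card κ) * Fintype.card V * (x ⬝ᵥ x) := by
  have hclasses : (∑ i, x i) ^ 2 / Fintype.card κ ≤ ∑ k, (∑ i with C i = k, x i) ^ 2 := by
    simpa [sum_fiberwise] using
      sq_sum_div_le_sum_sq_div univ (fun k => ∑ i with C i = k, x i) (g := fun _ => (1 : ℝ))
        (fun _ _ => one_pos)
  have hvertices : (∑ i, x i) ^ 2 ≤ Fintype.card V * (x ⬝ᵥ x) := by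
    simpa [dotProduct, sq] using sq_sum_le_card_mul_sum_sq (s := univ) (f := x)
  rw [dotProduct_adjMatrix_comap_top_mulVec]
  calc (∑ i, x i) ^ 2 - ∑ k, (∑ i with C i = k, x i) ^ 2
      ≤ (∑ i, x i) ^ 2 - (∑ i, x i) ^ 2 / Fintype.card κ := by linarith
    _ = (1 - 1 / Fintype.card κ) * (∑ i, x i) ^ 2 := by ring
    _ ≤ (1 - 1 / Fintype.card κ) * Fintype.card V * (x ⬝ᵥ x) := by
      rw [mul_assoc]
      exact mul_le_mul_of_nonneg_left hvertices (one_sub_one_div_natCast_nonneg _)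

lemma dotProduct_adjMatrix_comap_top_mulVec_nonpos {x : V → ℝ} (hx : 1 ⬝ᵥ x = 0) :
    x ⬝ᵥ ((⊤ : SimpleGraph κ).comap C).adjMatrix ℝ *ᵥ x ≤ 0 := by
  rw [dotProduct_adjMatrix_comap_top_mulVec, ← one_dotProduct, hx]
  simpa using sum_nonneg fun k _ => sq_nonneg (∑ i with C i = k, x i)

lemma sum_adjMatrix_comap_top_le :
    ∑ i, ∑ j, ((⊤ : SimpleGraph κ).comap C).adjMatrix ℝ i j ≤
      (1 - 1 / Fintype.card κ) * Fintype.card V ^ 2 := by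
  have h := dotProduct_adjMatrix_comap_top_mulVec_le C 1
  rw [one_dotProduct_one, mul_assoc, ← sq] at h
  simpa only [mulVec, dotProduct, Pi.one_apply, one_mul, mul_one] using h

lemma sum_abs_eigenvalues_adjMatrix_comap_top_le [DecidableEq V] :
    ∑ j, |(((⊤ : SimpleGraph κ).comap C).isHermitian_adjMatrix ℝ).eigenvalues j| ≤
      2 * ((1 - 1 / Fintype.card κ) * Fintype.card V) :=
  Matrix.IsHermitian.sum_abs_eigenvalues_le_two_mul _ (u := 1)
    (mul_nonneg (one_sub_one_div_natCast_nonneg _) (Nat.cast_nonneg _)) (trace_adjMatrix _ _)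
    (dotProduct_adjMatrix_comap_top_mulVec_le C)
    (fun _ => dotProduct_adjMatrix_comap_top_mulVec_nonpos C)

end CompleteMultipartite

end SimpleGraph

theorem energy_r_partite_le_general {n r : ℕ}
    (G : SimpleGraph (Fin n)) [DecidableRel G.Adj] (hG : G.Colorable r)
    (hA : (G.adjMatrix ℝ).IsHermitian) :
    ∑ i, |hA.eigenvalues i| ≤
      (n : ℝ) ^ (3 / 2 : ℝ) / 2 * Real.sqrt (1 - 1 / r) + (1 - 1 / r) * n := by
  obtain ⟨C⟩ := hG
  set H := (⊤ : SimpleGraph (Fin r)).comap C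
  have hGH : G ≤ H := fun _ _ h => C.valid h
  have hedges := SimpleGraph.sum_adjMatrix_comap_top_le (V := Fin n) C
  have henergy := SimpleGraph.sum_abs_eigenvalues_adjMatrix_comap_top_le (V := Fin n) C
  simp only [Fintype.card_fin] at hedges henergy
  have hsqrt : √(1 / 4 * ((1 - 1 / r) * n ^ 2)) = √(1 - 1 / r) * n / 2 := by
    rw [show 1 / 4 * ((1 - 1 / r) * (n : ℝ) ^ 2) = (√(1 - 1 / r) * n / 2) ^ 2 by
      rw [div_pow, mul_pow, Real.sq_sqrt (one_sub_one_div_natCast_nonneg r)]; ring,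
      Real.sqrt_sq (by positivity)]
  have hrpow : (n : ℝ) ^ (3 / 2 : ℝ) = n * √n := by
    rw [show (3 / 2 : ℝ) = 1 + 1 / 2 by norm_num,
      Real.rpow_add' (Nat.cast_nonneg n) (by norm_num), Real.rpow_one, ← Real.sqrt_eq_rpow]
  calc ∑ i, |hA.eigenvalues i|
      ≤ √n * √(1 / 4 * ∑ i, ∑ j, H.adjMatrix ℝ i j) +
          1 / 2 * ∑ i, |(H.isHermitian_adjMatrix ℝ).eigenvalues i| := by
        simpa using G.sum_abs_eigenvalues_adjMatrix_le_of_le hGH hA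
    _ ≤ √n * √(1 / 4 * ((1 - 1 / r) * n ^ 2)) + 1 / 2 * (2 * ((1 - 1 / r) * n)) := by gcongr
    _ = (n : ℝ) ^ (3 / 2 : ℝ) / 2 * Real.sqrt (1 - 1 / r) + (1 - 1 / r) * n := by
        rw [hsqrt, hrpow]; ring

/-- if `n ≥ r ≥ 2` and `G` is an `r`-partite graph on `n` vertices, then the sum
of the absolute values of its adjacency eigenvalues (its graph energy / trace norm) is at most
`(n^(3/2)/2) √(1 - 1/r) + (1 - 1/r) n`. -/
theorem energy_r_partite_le {n r : ℕ} (hr : 2 ≤ r) (hn : r ≤ n)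
    (G : SimpleGraph (Fin n)) [DecidableRel G.Adj] (hG : G.Colorable r)
    (hA : (G.adjMatrix ℝ).IsHermitian) :
    ∑ i, |hA.eigenvalues i| ≤
      (n : ℝ) ^ (3 / 2 : ℝ) / 2 * Real.sqrt (1 - 1 / r) + (1 - 1 / r) * n :=
  energy_r_partite_le_general G hG hA
end

section
/- The largest adjacency eigenvalue of an r-partite graph on n vertices is at most (1 - 1/r)·n. -/
open Matrix BigOperators Kronecker

open Finset in
lemma key_comb {n r : ℕ} (hr : 0 < r) (c : Fin n → Fin r) (y : Fin n → ℝ) :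
    ∑ u, ∑ w, (if c u = c w then 0 else y u * y w) ≤ (1 - 1 / r) * (∑ u, y u) ^ 2 := by
  classical
  set s : Fin r → ℝ := fun k => ∑ u ∈ univ.filter (fun u => c u = k), y u with hs
  have hsum : ∑ k, s k = ∑ u, y u := Finset.sum_fiberwise _ _ _
  have hdiag : ∑ u, ∑ w ∈ univ.filter (fun w => c w = c u), y u * y w = ∑ k, (s k) ^ 2 := by
    rw [← Finset.sum_fiberwise univ c (fun u => ∑ w ∈ univ.filter (fun w => c w = c u), y u * y w)]
    refine Finset.sum_congr rfl fun k _ => ?_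
    have : ∀ u ∈ univ.filter (fun u => c u = k),
        (∑ w ∈ univ.filter (fun w => c w = c u), y u * y w) = y u * s k := by
      intro u hu
      rw [Finset.mem_filter] at hu
      rw [hu.2, Finset.mul_sum]
    rw [Finset.sum_congr rfl this, ← Finset.sum_mul, sq]
  have hexpand : ∑ u, ∑ w, (if c u = c w then 0 else y u * y w)
      = (∑ u, y u) ^ 2 - ∑ k, (s k) ^ 2 := by
    rw [← hdiag, sq, Finset.sum_mul_sum, ← Finset.sum_sub_distrib]
    refine Finset.sum_congr rfl fun u _ => ?_
    rw [eq_sub_iff_add_eq]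
    rw [← Finset.sum_filter_add_sum_filter_not univ (fun w => c w = c u) (fun w => y u * y w)]
    rw [add_comm]
    congr 1
    rw [Finset.sum_filter]
    refine Finset.sum_congr rfl fun w _ => ?_
    by_cases h : c u = c w <;> simp [h, eq_comm, Ne, h]
  rw [hexpand]
  have hcs : (∑ u, y u) ^ 2 ≤ r * ∑ k, (s k) ^ 2 := by
    calc (∑ u, y u) ^ 2 = (∑ k, s k) ^ 2 := by rw [hsum]
    _ ≤ (Finset.univ : Finset (Fin r)).card * ∑ k, (s k) ^ 2 := sq_sum_le_card_mul_sum_sq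
    _ = r * ∑ k, (s k) ^ 2 := by simp
  have hr' : (0:ℝ) < r := by exact_mod_cast hr
  rw [sub_mul, one_mul]
  have : (1 / r : ℝ) * (∑ u, y u)^2 ≤ ∑ k, (s k)^2 := by
    rw [div_mul_eq_mul_div, one_mul, div_le_iff₀ hr']
    linarith [hcs]
  linarith

/-- Cvetković's bound: the largest adjacency eigenvalue of an `r`-partite graph
on `n` vertices is at most `(1 - 1/r) n`. -/
theorem largest_eigenvalue_r_partite_le {n r : ℕ} (hn : 0 < n) (hr : 0 < r)
    (G : SimpleGraph (Fin n)) [DecidableRel G.Adj] (hG : G.Colorable r)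
    (hA : (G.adjMatrix ℝ).IsHermitian) :
    (⨆ i, hA.eigenvalues i) ≤ (1 - 1 / r) * n := by
  obtain ⟨c⟩ := hG
  have : Nonempty (Fin n) := ⟨⟨0, hn⟩⟩
  apply ciSup_le
  intro i
  rw [hA.eigenvalues_eq i]
  set v : Fin n → ℝ := ⇑(hA.eigenvectorBasis i) with hv
  have hnorm : ∑ u, v u ^ 2 = 1 := by
    have h1 := hA.eigenvectorBasis.orthonormal.1 i
    rw [EuclideanSpace.norm_eq] at h1
    have h2 : ∑ u, ‖v u‖ ^ 2 = 1 := Real.sqrt_eq_one.mp h1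
    simpa [Real.norm_eq_abs, sq_abs] using h2
  have hre : RCLike.re ((star v) ⬝ᵥ (G.adjMatrix ℝ *ᵥ v)) = (star v) ⬝ᵥ (G.adjMatrix ℝ *ᵥ v) := rfl
  rw [hre]
  have hstar : star v = v := by funext u; simp
  rw [hstar]
  have hexp : v ⬝ᵥ (G.adjMatrix ℝ *ᵥ v) = ∑ u, ∑ w, (G.adjMatrix ℝ) u w * (v u * v w) := by
    simp only [dotProduct, mulVec, dotProduct, Finset.mul_sum]
    refine Finset.sum_congr rfl fun u _ => Finset.sum_congr rfl fun w _ => by ring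
  rw [hexp]
  have hbound : ∑ u, ∑ w, (G.adjMatrix ℝ) u w * (v u * v w)
      ≤ ∑ u, ∑ w, (if c u = c w then 0 else |v u| * |v w|) := by
    refine Finset.sum_le_sum fun u _ => Finset.sum_le_sum fun w _ => ?_
    rw [SimpleGraph.adjMatrix_apply]
    by_cases hadj : G.Adj u w
    · have hne : c u ≠ c w := c.valid hadj
      simp only [hadj, if_true, hne, if_neg hne, one_mul]
      calc v u * v w ≤ |v u * v w| := le_abs_self _
      _ = |v u| * |v w| := abs_mul _ _
    · simp only [hadj, if_false, zero_mul]
      by_cases h : c u = c w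
      · simp [h]
      · simp only [h, if_neg h]
        positivity
  refine hbound.trans ?_
  refine (key_comb hr c (fun u => |v u|)).trans ?_
  have h1r : (0:ℝ) ≤ 1 - 1 / r := by
    have : (1:ℝ) ≤ r := by exact_mod_cast hr
    have : (1:ℝ)/r ≤ 1 := by
      rw [div_le_one (by linarith)]
      linarith
    linarith
  refine mul_le_mul_of_nonneg_left ?_ h1r
  calc (∑ u, |v u|) ^ 2 ≤ (Finset.univ : Finset (Fin n)).card * ∑ u, |v u| ^ 2 :=
        sq_sum_le_card_mul_sum_sq
  _ = n := by simp [sq_abs, hnorm]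
end

section
/- Let G be an r-partite graph on n vertices with eigenvalues λ_1 ≥ λ_2 ≥ ... ≥ λ_n. Then λ_1 ≤ |λ_{n-r+2}| + |λ_{n-r+3}| + ... + |λ_n|, i.e., the largest eigenvalue is at most the sum of the absolute values of the r−1 smallest eigenvalues. -/
/-!
Hoffman's argument. Let `x` be a unit eigenvector for the top eigenvalue `μ₀` and split
`x = ∑ₖ zₖ` along the colour classes of a proper `r`-colouring. The pieces are pairwise orthogonal
and, each colour class being independent, `⟪zₖ, A zₖ⟫ = 0`. Let `P` be the orthogonal projection
onto `span {zₖ} ⊖ ℝ x`, a space of dimension at most `r - 1`. In an orthonormal eigenbasis `(vᵢ)`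
the weights `wᵢ = ‖P vᵢ‖²` lie in `[0, 1]` and sum to at most `r - 1`, while
`∑ᵢ μᵢ wᵢ = tr (P A P) = ∑ₖ ⟪zₖ, A zₖ⟫ / ‖zₖ‖² - μ₀ = -μ₀`. Such a weighted sum of eigenvalues is
at least the sum of the negative parts of the `r - 1` smallest ones.
-/

open Matrix BigOperators Kronecker

open Finset RealInnerProductSpace

theorem sum_le_sum_mul_of_threshold {ι : Type*} [Fintype ι] {f w : ι → ℝ} {s : Finset ι}
    {t : ℝ} (ht : t ≤ 0) (hs : ∀ i ∈ s, f i ≤ t) (hsc : ∀ i ∉ s, t ≤ f i)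
    (hw₀ : ∀ i, 0 ≤ w i) (hw₁ : ∀ i, w i ≤ 1) (hw : ∑ i, w i ≤ #s) :
    ∑ i ∈ s, f i ≤ ∑ i, f i * w i := by
  classical
  -- termwise `(f i - t) * (w i - 𝟙ₛ i) ≥ 0`
  have key (i : ι) :
      t * (w i - if i ∈ s then 1 else 0) ≤ f i * w i - if i ∈ s then f i else 0 := by
    split_ifs with hi
    · nlinarith [hs i hi, hw₁ i]
    · nlinarith [hsc i hi, hw₀ i]
  have hsum := sum_le_sum fun i (_ : i ∈ univ) => key i
  rw [← mul_sum, sum_sub_distrib, sum_sub_distrib, sum_ite_mem, sum_ite_mem, univ_inter,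
    sum_const, nsmul_one] at hsum
  linarith [mul_nonneg_of_nonpos_of_nonpos ht (sub_nonpos.2 hw)]

theorem neg_sum_abs_le_sum_mul_of_threshold {ι : Type*} [Fintype ι] {f w : ι → ℝ}
    {s : Finset ι} {t : ℝ} (hs : ∀ i ∈ s, f i ≤ t) (hsc : ∀ i ∉ s, t ≤ f i)
    (hw₀ : ∀ i, 0 ≤ w i) (hw₁ : ∀ i, w i ≤ 1) (hw : ∑ i, w i ≤ #s) :
    -∑ i ∈ s, |f i| ≤ ∑ i, f i * w i :=
  calc -∑ i ∈ s, |f i| ≤ ∑ i ∈ s, min (f i) 0 := by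
        rw [← sum_neg_distrib]
        exact sum_le_sum fun i _ => le_min (neg_abs_le _) (neg_nonpos.2 (abs_nonneg _))
    _ ≤ ∑ i, min (f i) 0 * w i :=
        sum_le_sum_mul_of_threshold (min_le_right t 0) (fun i hi => min_le_min_right 0 (hs i hi))
          (fun i hi => min_le_min_right 0 (hsc i hi)) hw₀ hw₁ hw
    _ ≤ ∑ i, f i * w i :=
        sum_le_sum fun i _ => mul_le_mul_of_nonneg_right (min_le_left _ _) (hw₀ i)

theorem Fin.card_filter_le_val (n m : ℕ) : #{i : Fin n | m ≤ (i : ℕ)} = n - m := by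
  have hlt := Fin.card_filter_val_lt (n := n) (m := m)
  have hsplit := card_filter_add_card_filter_not (s := univ) fun i : Fin n => (i : ℕ) < m
  simp only [not_lt, card_univ, Fintype.card_fin] at hsplit
  omega

section InnerProductSpace

variable {E ι κ : Type*} [NormedAddCommGroup E] [InnerProductSpace ℝ E] [Fintype ι] [Fintype κ]

theorem OrthonormalBasis.inner_apply_self_eq_sum (b : OrthonormalBasis ι ℝ E) {T : E →ₗ[ℝ] E}
    {μ : ι → ℝ} (hT : ∀ i, T (b i) = μ i • b i) (y : E) :
    ⟪y, T y⟫ = ∑ i, μ i * ⟪y, b i⟫ ^ 2 := by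
  have hTy : T y = ∑ i, (μ i * ⟪b i, y⟫) • b i := by
    conv_lhs => rw [← b.sum_repr' y]
    simp only [map_sum, map_smul, hT, smul_smul, mul_comm]
  simp only [hTy, inner_sum, inner_smul_right, real_inner_comm y (b _), sq, mul_assoc]

theorem Orthonormal.sum_inner_sq_le {u : κ → E} (hu : Orthonormal ℝ u) (v : E) :
    ∑ k, ⟪u k, v⟫ ^ 2 ≤ ‖v‖ ^ 2 := by
  simpa only [Real.norm_eq_abs, sq_abs] using hu.sum_inner_products_le v (s := univ)

theorem Orthonormal.inner_sum_smul_sq_le {u : κ → E} (hu : Orthonormal ℝ u) (c : κ → ℝ)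
    (v : E) : ⟪∑ k, c k • u k, v⟫ ^ 2 ≤ ‖∑ k, c k • u k‖ ^ 2 * ∑ k, ⟪u k, v⟫ ^ 2 := by
  have hnorm : ‖∑ k, c k • u k‖ ^ 2 = ∑ k, c k ^ 2 := by
    rw [← real_inner_self_eq_norm_sq, hu.inner_sum]
    simp [sq]
  rw [hnorm, sum_inner]
  simp only [inner_smul_left, RCLike.conj_to_real]
  exact sum_mul_sq_le_sq_mul_sq _ _ _

theorem le_sum_abs_eigenvalues_of_orthonormal_isotropic (b : OrthonormalBasis ι ℝ E)
    {T : E →ₗ[ℝ] E} {μ : ι → ℝ} (hT : ∀ i, T (b i) = μ i • b i) {u : κ → E}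
    (hu : Orthonormal ℝ u) (hTu : ∀ k, ⟪u k, T (u k)⟫ = 0) {c : κ → ℝ} {x : E}
    (hcx : ∑ k, c k • u k = x) {μ₀ : ℝ} (hx : ‖x‖ = 1) (hTx : T x = μ₀ • x) {s : Finset ι}
    {t : ℝ} (hs : ∀ i ∈ s, μ i ≤ t) (hsc : ∀ i ∉ s, t ≤ μ i) (hκ : Fintype.card κ ≤ #s + 1) :
    μ₀ ≤ ∑ i ∈ s, |μ i| := by
  -- `w i = ‖P (b i)‖²`, with `P` the orthogonal projection onto `span (range u) ⊖ ℝ ∙ x`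
  set w : ι → ℝ := fun i => ∑ k, ⟪u k, b i⟫ ^ 2 - ⟪x, b i⟫ ^ 2
  have hw₀ (i : ι) : 0 ≤ w i := by
    have := hu.inner_sum_smul_sq_le c (b i)
    rw [hcx, hx, one_pow, one_mul] at this
    exact sub_nonneg.2 this
  have hw₁ (i : ι) : w i ≤ 1 := by
    have := hu.sum_inner_sq_le (b i)
    rw [b.orthonormal.norm_eq_one, one_pow] at this
    nlinarith [sq_nonneg ⟪x, b i⟫]
  have hw : ∑ i, w i ≤ #s := by
    simp only [w, sum_sub_distrib]
    rw [sum_comm]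
    simp only [b.sum_sq_inner_left, hu.norm_eq_one, hx, one_pow, sum_const, card_univ,
      nsmul_one]
    have : (Fintype.card κ : ℝ) ≤ #s + 1 := by exact_mod_cast hκ
    linarith
  have hμw : ∑ i, μ i * w i = -μ₀ := by
    simp only [w, mul_sub, sum_sub_distrib, mul_sum]
    rw [sum_comm]
    simp only [← b.inner_apply_self_eq_sum hT, hTu, sum_const_zero, hTx, inner_smul_right,
      real_inner_self_eq_norm_sq, hx]
    ring
  linarith [neg_sum_abs_le_sum_mul_of_threshold hs hsc hw₀ hw₁ hw]

theorem le_sum_abs_eigenvalues_of_orthogonal_isotropic (b : OrthonormalBasis ι ℝ E)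
    {T : E →ₗ[ℝ] E} {μ : ι → ℝ} (hT : ∀ i, T (b i) = μ i • b i) {z : κ → E}
    (hz : Pairwise fun k l => ⟪z k, z l⟫ = 0) (hTz : ∀ k, ⟪z k, T (z k)⟫ = 0) {x : E}
    (hzx : ∑ k, z k = x) {μ₀ : ℝ} (hx : ‖x‖ = 1) (hTx : T x = μ₀ • x) {s : Finset ι} {t : ℝ}
    (hs : ∀ i ∈ s, μ i ≤ t) (hsc : ∀ i ∉ s, t ≤ μ i) (hκ : Fintype.card κ ≤ #s + 1) :
    μ₀ ≤ ∑ i ∈ s, |μ i| := by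
  classical
  let u : {k // z k ≠ 0} → E := fun k => ‖z k‖⁻¹ • z k
  have hu : Orthonormal ℝ u := by
    refine ⟨fun k => norm_smul_inv_norm k.2, fun k l hkl => ?_⟩
    simp [u, inner_smul_left, inner_smul_right, hz (Subtype.coe_ne_coe.2 hkl)]
  have hTu (k : {k // z k ≠ 0}) : ⟪u k, T (u k)⟫ = 0 := by
    simp [u, inner_smul_left, inner_smul_right, hTz]
  have hux : ∑ k, ‖z k.1‖ • u k = x := by
    have (k : {k // z k ≠ 0}) : ‖z k‖ • u k = z k := smul_inv_smul₀ (norm_ne_zero_iff.2 k.2) _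
    simp only [this, ← hzx]
    exact (sum_subtype {k | z k ≠ 0} (by simp) z).symm.trans (sum_filter_ne_zero univ)
  exact le_sum_abs_eigenvalues_of_orthonormal_isotropic b hT hu hTu hux hx hTx hs hsc
    ((Fintype.card_subtype_le _).trans hκ)

end InnerProductSpace

theorem Matrix.IsHermitian.toEuclideanLin_eigenvectorBasis {𝕜 n : Type*} [RCLike 𝕜] [Fintype n]
    [DecidableEq n] {A : Matrix n n 𝕜} (hA : A.IsHermitian) (i : n) :
    toEuclideanLin A (hA.eigenvectorBasis i) = hA.eigenvalues i • hA.eigenvectorBasis i := by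
  ext1
  simp [toLpLin_apply, hA.mulVec_eigenvectorBasis]

namespace SimpleGraph

variable {V : Type*} [Fintype V] {G : SimpleGraph V} [DecidableRel G.Adj]

theorem IsIndepSet.indicator_dotProduct_adjMatrix_mulVec {R : Type*} [NonAssocSemiring R]
    {s : Set V} (hs : G.IsIndepSet s) (y : V → R) :
    s.indicator y ⬝ᵥ (G.adjMatrix R *ᵥ s.indicator y) = 0 := by
  refine sum_eq_zero fun u _ => ?_
  by_cases hu : u ∈ s
  · refine mul_eq_zero_of_right _ (sum_eq_zero fun v _ => ?_)
    by_cases hv : v ∈ s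
    · have : ¬G.Adj u v := fun h => hs hu hv h.ne h
      simp [this]
    · simp [hv]
  · simp [hu]

theorem Coloring.le_sum_abs_eigenvalues [DecidableEq V] {α ι : Type*} [Fintype α] [Fintype ι]
    (C : G.Coloring α) (b : OrthonormalBasis ι ℝ (EuclideanSpace ℝ V)) {μ : ι → ℝ}
    (hb : ∀ i, toEuclideanLin (G.adjMatrix ℝ) (b i) = μ i • b i) (i₀ : ι) {s : Finset ι}
    {t : ℝ} (hs : ∀ i ∈ s, μ i ≤ t) (hsc : ∀ i ∉ s, t ≤ μ i) (hα : Fintype.card α ≤ #s + 1) :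
    μ i₀ ≤ ∑ i ∈ s, |μ i| := by
  classical
  let z : α → EuclideanSpace ℝ V := fun k => WithLp.toLp 2 ((C.colorClass k).indicator (b i₀))
  have hz : Pairwise fun k l => ⟪z k, z l⟫ = 0 := by
    intro k l hkl
    rw [EuclideanSpace.inner_toLp_toLp, star_trivial]
    refine sum_eq_zero fun v _ => ?_
    simp only [Set.indicator_apply, Coloring.colorClass, Set.mem_ofPred_eq]
    split_ifs with hl hk
    · exact absurd (hk.symm.trans hl) hkl
    all_goals simp
  have hTz (k : α) : ⟪z k, toEuclideanLin (G.adjMatrix ℝ) (z k)⟫ = 0 := by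
    rw [toLpLin_toLp, EuclideanSpace.inner_toLp_toLp, star_trivial, dotProduct_comm]
    exact (C.isIndepSet_colorClass k).indicator_dotProduct_adjMatrix_mulVec _
  have hzx : ∑ k, z k = b i₀ := by
    ext v
    simp [z, Set.indicator_apply, Coloring.colorClass]
  exact le_sum_abs_eigenvalues_of_orthogonal_isotropic b hb hz hTz hzx
    (b.orthonormal.norm_eq_one i₀) (hb i₀) hs hsc hα

end SimpleGraph

/-- Hoffman's bound: if `G` is an `r`-partite graph on `n` vertices with
adjacency eigenvalues `μ 0 ≥ μ 1 ≥ ... ≥ μ (n-1)` (in non-increasing order), then the largest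
eigenvalue is at most the sum of the absolute values of the `r - 1` smallest eigenvalues,
i.e. `μ 0 ≤ |μ (n-r+1)| + ... + |μ (n-1)|`. -/
theorem hoffman_bound_r_partite {n r : ℕ} (hn : 0 < n) (hr : 2 ≤ r) (hrn : r ≤ n)
    (G : SimpleGraph (Fin n)) [DecidableRel G.Adj] (hG : G.Colorable r)
    (hA : (G.adjMatrix ℝ).IsHermitian)
    (μ : Fin n → ℝ) (σ : Equiv.Perm (Fin n))
    (hμ : ∀ i, μ i = hA.eigenvalues (σ i))
    (hsort : ∀ i j : Fin n, i ≤ j → μ j ≤ μ i) :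
    μ ⟨0, hn⟩ ≤ ∑ i ∈ Finset.univ.filter (fun i : Fin n => n - r + 1 ≤ (i : ℕ)), |μ i| := by
  obtain ⟨C⟩ := hG
  have hb (i : Fin n) : toEuclideanLin (G.adjMatrix ℝ) (hA.eigenvectorBasis.reindex σ.symm i) =
      μ i • hA.eigenvectorBasis.reindex σ.symm i := by
    rw [OrthonormalBasis.reindex_apply, Equiv.symm_symm, hA.toEuclideanLin_eigenvectorBasis, hμ]
  refine C.le_sum_abs_eigenvalues _ hb ⟨0, hn⟩ (t := μ ⟨n - r + 1, by omega⟩)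
    (fun i hi => hsort _ _ ?_) (fun i hi => hsort _ _ ?_) ?_
  · simpa [Fin.le_def] using hi
  · simp only [mem_filter, mem_univ, true_and, not_le] at hi
    exact Fin.le_def.2 (by simp only; omega)
  · rw [Fintype.card_fin, Fin.card_filter_le_val]
    omega
end

section
/- Let C be a conference matrix of order r and H an Hadamard matrix of order k. Then A := C ⊗ H is an r-partite matrix of order n = rk with all entries of absolute value at most 1, and its trace norm equals n^(3/2)·sqrt(1 − 1/r). -/
/-!
A conference matrix `C` and a Hadamard matrix `H` satisfy `C Cᴴ = (r - 1) I` and `H Hᴴ = k I`,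
so `A = C ⊗ H` satisfies `A Aᴴ = (r - 1) k I`. Hence every singular value of `A` equals
`√((r - 1) k)`, and the trace norm is `r k √((r - 1) k) = n^(3/2) √(1 - 1/r)`. The diagonal
blocks of `A` are `C i i • H = 0`, and its entries are products of entries of modulus at most `1`.
-/

open Matrix BigOperators Kronecker

section Kronecker

variable {R : Type*} {l m : Type*}

theorem kronecker_apply_eq_zero_of_fst_eq [MulZeroClass R] {A : Matrix l l R} {B : Matrix m m R}
    (hA : ∀ i, A i i = 0) {i j : l × m} (hij : i.1 = j.1) : (A ⊗ₖ B) i j = 0 := by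
  rw [kronecker_apply, hij, hA, zero_mul]

theorem norm_kronecker_apply_le_one [NonUnitalSeminormedRing R] {A : Matrix l l R}
    {B : Matrix m m R} (hA : ∀ i j, ‖A i j‖ ≤ 1) (hB : ∀ i j, ‖B i j‖ ≤ 1) (i j : l × m) :
    ‖(A ⊗ₖ B) i j‖ ≤ 1 :=
  (norm_mul_le _ _).trans (mul_le_one₀ (hA _ _) (norm_nonneg _) (hB _ _))

theorem kronecker_mul_conjTranspose_eq_smul_one [CommSemiring R] [StarRing R] [Fintype l]
    [Fintype m] [DecidableEq l] [DecidableEq m] {A : Matrix l l R} {B : Matrix m m R} {a b : R}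
    (hA : A * Aᴴ = a • 1) (hB : B * Bᴴ = b • 1) : (A ⊗ₖ B) * (A ⊗ₖ B)ᴴ = (a * b) • 1 := by
  rw [conjTranspose_kronecker, ← mul_kronecker_mul, hA, hB, smul_kronecker, kronecker_smul,
    one_kronecker_one, smul_smul]

end Kronecker

section ScalarGram

variable {𝕜 : Type*} [RCLike 𝕜] {m : Type*} [Fintype m] [DecidableEq m]

theorem Matrix.IsHermitian.eigenvalues_eq_of_eq_smul_one {A : Matrix m m 𝕜} (hA : A.IsHermitian)
    {c : ℝ} (h : A = (c : 𝕜) • 1) (i : m) : hA.eigenvalues i = c := by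
  have hA' : ∀ v, A *ᵥ v = (c : 𝕜) • v := fun v ↦ by rw [h, smul_mulVec, one_mulVec]
  rw [hA.eigenvalues_eq, hA', dotProduct_smul, dotProduct_comm,
    ← EuclideanSpace.inner_eq_star_dotProduct, inner_self_eq_norm_sq_to_K,
    hA.eigenvectorBasis.orthonormal.1 i]
  simp

theorem traceNorm_eq_of_mul_conjTranspose_eq_smul_one {A : Matrix m m 𝕜} {c : ℝ}
    (h : A * Aᴴ = (c : 𝕜) • 1) : traceNorm A = Fintype.card m * √c := by
  simp [traceNorm, singularValues,
    (isHermitian_mul_conjTranspose_self A).eigenvalues_eq_of_eq_smul_one h]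

end ScalarGram

theorem Real.mul_mul_sqrt_sub_one_mul_eq_rpow {r k : ℝ} (hr : 0 ≤ r) (hk : 0 ≤ k) :
    r * k * √((r - 1) * k) = (r * k) ^ (3 / 2 : ℝ) * √(1 - 1 / r) := by
  rcases hr.eq_or_lt with rfl | hr
  · simp
  have hrk : 0 ≤ r * k := by positivity
  rw [show (3 / 2 : ℝ) = 1 + 1 / 2 by norm_num, Real.rpow_add' hrk (by norm_num), Real.rpow_one,
    ← Real.sqrt_eq_rpow, mul_assoc (r * k), ← Real.sqrt_mul hrk]
  congr 2
  field_simp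

/-- if `C` is a conference matrix of order `r` and `H` an Hadamard matrix of
order `k`, then `C ⊗ H` is an `r`-partite matrix of order `n = r k` (with respect to the
partition of the index set into the `r` blocks of length `k`), all its entries have absolute
value at most `1`, and its trace norm equals `n^(3/2) √(1 - 1/r)`. -/
theorem kronecker_conference_hadamard {r k : ℕ}
    (C : Matrix (Fin r) (Fin r) ℂ)
    (hCdiag : ∀ i, C i i = 0)
    (hCoff : ∀ i j, i ≠ j → ‖C i j‖ = 1)
    (hC : C * Cᴴ = ((r : ℂ) - 1) • 1)
    (H : Matrix (Fin k) (Fin k) ℂ)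
    (hHent : ∀ i j, ‖H i j‖ = 1)
    (hH : H * Hᴴ = (k : ℂ) • 1) :
    (∀ i j : Fin r × Fin k, i.1 = j.1 → (C ⊗ₖ H) i j = 0) ∧
    (∀ i j, ‖(C ⊗ₖ H) i j‖ ≤ 1) ∧
    traceNorm (C ⊗ₖ H) = ((r * k : ℕ) : ℝ) ^ (3 / 2 : ℝ) * Real.sqrt (1 - 1 / r) := by
  have hCle : ∀ i j, ‖C i j‖ ≤ 1 := fun i j ↦ by
    rcases eq_or_ne i j with rfl | hij
    · simp [hCdiag]
    · exact (hCoff i j hij).le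
  have hCH : (C ⊗ₖ H) * (C ⊗ₖ H)ᴴ = ((((r : ℝ) - 1) * k : ℝ) : ℂ) • 1 := by
    rw [kronecker_mul_conjTranspose_eq_smul_one hC hH]
    congr 1
    push_cast
    ring
  refine ⟨fun i j ↦ kronecker_apply_eq_zero_of_fst_eq hCdiag,
    norm_kronecker_apply_le_one hCle fun i j ↦ (hHent i j).le, ?_⟩
  rw [traceNorm_eq_of_mul_conjTranspose_eq_smul_one hCH, Fintype.card_prod, Fintype.card_fin,
    Fintype.card_fin, Nat.cast_mul]
  exact Real.mul_mul_sqrt_sub_one_mul_eq_rpow r.cast_nonneg k.cast_nonneg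
end

section
/- Let C be a real symmetric conference matrix of order r and H a real symmetric Hadamard matrix of order k with n = rk. Then A := (1/2)(C ⊗ H + K_r ⊗ J_k) is the adjacency matrix of an r-partite graph G of order n whose trace norm satisfies ‖G‖_* ≥ (n^(3/2)/2)·sqrt(1 − 1/r) − (1 − 1/r)·n. -/
/-!
`B = C ⊗ H` satisfies `Bᵀ B = (r - 1) k I`, so `B / √((r - 1) k)` is orthogonal and trace
duality gives `√((r - 1) k) ‖A‖_* ≥ tr (A B)`. As `2A = B + K_r ⊗ J_k`,
`2 tr (A B) = (r - 1) k · r k + (1ᵀ C 1)(1ᵀ H 1)`, and Cauchy–Schwarz bounds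
`|1ᵀ C 1| ≤ r √(r - 1)` and `|1ᵀ H 1| ≤ k √k`. Hence `‖A‖_* ≥ r k (√((r - 1) k) - 1) / 2`,
which dominates the claimed bound once `r ≥ 2`; for `r ≤ 1` the claimed bound is `0`.
Off the diagonal blocks the entries `(C i j H a b + 1) / 2` are `0` or `1`, and on them `A`
vanishes, so the blocks are colour classes.
-/

open Matrix BigOperators Kronecker

section DotProduct

variable {m n : Type*} [Fintype m]

theorem dotProduct_sq_le_dotProduct_self_mul (x y : m → ℝ) :
    (x ⬝ᵥ y) ^ 2 ≤ (x ⬝ᵥ x) * (y ⬝ᵥ y) := by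
  simpa only [dotProduct, sq] using Finset.sum_mul_sq_le_sq_mul_sq Finset.univ x y

theorem mulVec_dotProduct_mulVec {R : Type*} [CommSemiring R] [Fintype n]
    (M N : Matrix n m R) (x y : m → R) :
    (M *ᵥ x) ⬝ᵥ (N *ᵥ y) = x ⬝ᵥ ((Mᵀ * N) *ᵥ y) := by
  rw [dotProduct_mulVec, vecMul_mulVec, ← dotProduct_mulVec]

theorem trace_eq_sum_dotProduct_mulVec {R : Type*} [CommRing R] [DecidableEq m]
    {U : Matrix m m R} (hU : U * Uᵀ = 1) (M : Matrix m m R) :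
    M.trace = ∑ i, Uᵀ i ⬝ᵥ (M *ᵥ Uᵀ i) := by
  calc M.trace = (Uᵀ * M * U).trace := by
        rw [Matrix.mul_assoc, trace_mul_comm, Matrix.mul_assoc, hU, Matrix.mul_one]
    _ = _ := by
        refine Finset.sum_congr rfl fun i _ => ?_
        rw [diag_apply, Matrix.mul_assoc, mul_apply']
        rfl

theorem sq_sum_sum_le_of_transpose_mul_self_eq [DecidableEq m] (M : Matrix m m ℝ) (d : ℝ)
    (hM : Mᵀ * M = d • 1) :
    (∑ i, ∑ j, M i j) ^ 2 ≤ d * Fintype.card m ^ 2 := by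
  have hsum : ∑ i, ∑ j, M i j = (fun _ => 1) ⬝ᵥ (M *ᵥ fun _ => 1) := by
    simp [dotProduct, mulVec]
  have hone : ((fun _ => 1 : m → ℝ) ⬝ᵥ fun _ => 1) = Fintype.card m := by
    simp [dotProduct]
  have hM1 : (M *ᵥ fun _ => 1) ⬝ᵥ (M *ᵥ fun _ => 1) = d * Fintype.card m := by
    rw [mulVec_dotProduct_mulVec, hM, smul_mulVec, one_mulVec, dotProduct_smul, hone,
      smul_eq_mul]
  calc (∑ i, ∑ j, M i j) ^ 2 ≤ _ := hsum ▸ dotProduct_sq_le_dotProduct_self_mul _ _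
    _ = d * Fintype.card m ^ 2 := by rw [hone, hM1]; ring

end DotProduct

section TraceNorm

variable {m : Type*} [Fintype m] [DecidableEq m]

theorem traceNorm_nonneg {𝕜 : Type*} [RCLike 𝕜] (A : Matrix m m 𝕜) : 0 ≤ traceNorm A :=
  Finset.sum_nonneg fun _ _ => Real.sqrt_nonneg _

theorem dotProduct_mul_mulVec_le_mul_sqrt {A B : Matrix m m ℝ} {c μ : ℝ} {u : m → ℝ}
    (hc : 0 ≤ c) (hB : Bᵀ * B = c ^ 2 • 1) (hu : u ⬝ᵥ u = 1)
    (hAu : (A * Aᵀ) *ᵥ u = μ • u) :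
    u ⬝ᵥ ((A * B) *ᵥ u) ≤ c * √μ := by
  have hAB : u ⬝ᵥ ((A * B) *ᵥ u) = (Aᵀ *ᵥ u) ⬝ᵥ (B *ᵥ u) := by
    rw [mulVec_dotProduct_mulVec, transpose_transpose]
  have hA : (Aᵀ *ᵥ u) ⬝ᵥ (Aᵀ *ᵥ u) = μ := by
    rw [mulVec_dotProduct_mulVec, transpose_transpose, hAu, dotProduct_smul, hu, smul_eq_mul,
      mul_one]
  have hBu : (B *ᵥ u) ⬝ᵥ (B *ᵥ u) = c ^ 2 := by
    rw [mulVec_dotProduct_mulVec, hB, smul_mulVec, one_mulVec, dotProduct_smul, hu, smul_eq_mul,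
      mul_one]
  calc u ⬝ᵥ ((A * B) *ᵥ u) ≤ √(μ * c ^ 2) := by
        rw [hAB, ← hA, ← hBu]
        exact Real.le_sqrt_of_sq_le (dotProduct_sq_le_dotProduct_self_mul _ _)
    _ = c * √μ := by rw [Real.sqrt_mul' _ (sq_nonneg c), Real.sqrt_sq hc, mul_comm]

/-- Trace duality: `B / c` is orthogonal, and `|tr (A U)| ≤ ‖A‖_*` for orthogonal `U`. -/
theorem trace_mul_le_mul_traceNorm (A B : Matrix m m ℝ) {c : ℝ} (hc : 0 ≤ c)
    (hB : Bᵀ * B = c ^ 2 • 1) : (A * B).trace ≤ c * traceNorm A := by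
  set hAA := isHermitian_mul_conjTranspose_self A
  set U : Matrix m m ℝ := ↑hAA.eigenvectorUnitary
  have hU : U * Uᵀ = 1 := by
    rw [← conjTranspose_eq_transpose_of_trivial]
    exact mem_unitaryGroup_iff.mp hAA.eigenvectorUnitary.2
  have hU' : Uᵀ * U = 1 := mul_eq_one_comm.mp hU
  rw [trace_eq_sum_dotProduct_mulVec hU, traceNorm, Finset.mul_sum]
  refine Finset.sum_le_sum fun i _ => dotProduct_mul_mulVec_le_mul_sqrt hc hB ?_ ?_
  · exact (mul_apply').symm.trans ((congr_fun₂ hU' i i).trans (one_apply_eq i))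
  · rw [← conjTranspose_eq_transpose_of_trivial]
    exact hAA.mulVec_eigenvectorBasis i

end TraceNorm

theorem Matrix.IsAdjMatrix.colorable_toGraph {V ι α : Type*} [Fintype ι] [MulZeroOneClass α]
    [Nontrivial α] {A : Matrix V V α} (hA : A.IsAdjMatrix) (f : V → ι)
    (hf : ∀ u v, f u = f v → A u v = 0) :
    hA.toGraph.Colorable (Fintype.card ι) :=
  (SimpleGraph.Coloring.mk f fun {u v} huv hfuv => by
    simp [IsAdjMatrix.toGraph_adj, hf u v hfuv] at huv).colorable

theorem trace_allOnes_mul {m R : Type*} [Fintype m] [Semiring R] (M : Matrix m m R) :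
    ((of fun _ _ => (1 : R)) * M).trace = ∑ i, ∑ j, M i j := by
  simp only [trace, diag_apply, mul_apply, of_apply, one_mul]
  exact Finset.sum_comm

section ConferenceHadamard

variable {ι κ : Type*} [DecidableEq ι]

noncomputable def conferenceHadamardMatrix (C : Matrix ι ι ℝ) (H : Matrix κ κ ℝ) :
    Matrix (ι × κ) (ι × κ) ℝ :=
  (1 / 2 : ℝ) • (C ⊗ₖ H + ((of fun _ _ => (1 : ℝ)) - (1 : Matrix ι ι ℝ)) ⊗ₖ
    (of fun _ _ => (1 : ℝ)))

variable {C : Matrix ι ι ℝ} {H : Matrix κ κ ℝ}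

theorem conferenceHadamardMatrix_apply (i j : ι) (a b : κ) :
    conferenceHadamardMatrix C H (i, a) (j, b) = (C i j * H a b + if i = j then 0 else 1) / 2 := by
  by_cases h : i = j <;> simp [conferenceHadamardMatrix, h, one_apply] <;> ring

theorem conferenceHadamardMatrix_apply_of_fst_eq (hCdiag : ∀ i, C i i = 0) {u v : ι × κ}
    (huv : u.1 = v.1) : conferenceHadamardMatrix C H u v = 0 := by
  obtain ⟨i, a⟩ := u
  obtain ⟨j, b⟩ := v
  obtain rfl : i = j := huv
  simp [conferenceHadamardMatrix_apply, hCdiag]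

theorem isAdjMatrix_conferenceHadamardMatrix (hCsymm : C.IsSymm) (hCdiag : ∀ i, C i i = 0)
    (hCoff : ∀ i j, i ≠ j → C i j = 1 ∨ C i j = -1) (hHsymm : H.IsSymm)
    (hHent : ∀ a b, H a b = 1 ∨ H a b = -1) :
    (conferenceHadamardMatrix C H).IsAdjMatrix where
  zero_or_one := by
    rintro ⟨i, a⟩ ⟨j, b⟩
    by_cases h : i = j
    · exact .inl (conferenceHadamardMatrix_apply_of_fst_eq hCdiag h)
    · rw [conferenceHadamardMatrix_apply, if_neg h]
      rcases hCoff i j h with hc | hc <;> rcases hHent a b with hh | hh <;> norm_num [hc, hh]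
  symm := by
    ext ⟨i, a⟩ ⟨j, b⟩
    simp only [transpose_apply, conferenceHadamardMatrix_apply, hCsymm.apply, hHsymm.apply,
      eq_comm (a := i)]
  apply_diag _ := conferenceHadamardMatrix_apply_of_fst_eq hCdiag rfl

variable [Fintype ι] [Fintype κ] [DecidableEq κ]

theorem trace_conferenceHadamardMatrix_mul_kronecker (hCdiag : ∀ i, C i i = 0)
    (hC : C * C = ((Fintype.card ι : ℝ) - 1) • 1)
    (hH : H * H = (Fintype.card κ : ℝ) • 1) :
    (conferenceHadamardMatrix C H * (C ⊗ₖ H)).trace =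
      (((Fintype.card ι : ℝ) - 1) * Fintype.card κ * (Fintype.card ι * Fintype.card κ) +
        (∑ i, ∑ j, C i j) * ∑ a, ∑ b, H a b) / 2 := by
  have hCtr : C.trace = 0 := Finset.sum_eq_zero fun i _ => hCdiag i
  rw [conferenceHadamardMatrix, Matrix.smul_mul, Matrix.add_mul, ← mul_kronecker_mul,
    ← mul_kronecker_mul, trace_smul, trace_add, trace_kronecker, trace_kronecker, hC, hH,
    Matrix.sub_mul, trace_sub, Matrix.one_mul, hCtr, trace_allOnes_mul, trace_allOnes_mul]
  simp only [trace_smul, trace_one, smul_eq_mul]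
  ring

theorem le_traceNorm_conferenceHadamardMatrix (hCsymm : C.IsSymm) (hCdiag : ∀ i, C i i = 0)
    (hC : C * C = ((Fintype.card ι : ℝ) - 1) • 1) (hHsymm : H.IsSymm)
    (hH : H * H = (Fintype.card κ : ℝ) • 1) :
    Fintype.card ι * Fintype.card κ * (√((Fintype.card ι - 1) * Fintype.card κ) - 1) / 2 ≤
      traceNorm (conferenceHadamardMatrix C H) := by
  have htr := trace_conferenceHadamardMatrix_mul_kronecker hCdiag hC hH
  have hsC := sq_sum_sum_le_of_transpose_mul_self_eq C _ (by rw [hCsymm.eq, hC])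
  have hsH := sq_sum_sum_le_of_transpose_mul_self_eq H _ (by rw [hHsymm.eq, hH])
  set r : ℝ := (Fintype.card ι : ℝ)
  set k : ℝ := (Fintype.card κ : ℝ)
  set c := √((r - 1) * k)
  have hr : 0 ≤ r := Nat.cast_nonneg _
  have hk : 0 ≤ k := Nat.cast_nonneg _
  rcases (Real.sqrt_nonneg _ : 0 ≤ c).eq_or_lt with hc | hc
  · rw [show c = 0 from hc.symm]
    nlinarith [traceNorm_nonneg (conferenceHadamardMatrix C H), mul_nonneg hr hk]
  have hc2 : c ^ 2 = (r - 1) * k := Real.sq_sqrt (Real.sqrt_pos.mp hc).le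
  have hB : (C ⊗ₖ H)ᵀ * (C ⊗ₖ H) = c ^ 2 • 1 := by
    rw [← kroneckerMap_transpose, hCsymm.eq, hHsymm.eq, ← mul_kronecker_mul, hC, hH,
      smul_kronecker, kronecker_smul, one_kronecker_one, smul_smul, hc2]
  have hdual := trace_mul_le_mul_traceNorm (conferenceHadamardMatrix C H) _ hc.le hB
  -- `(∑ C)² (∑ H)² ≤ (r - 1) r² · k³ = (r k c)²`
  have hsums : -(r * k * c) ≤ (∑ i, ∑ j, C i j) * ∑ a, ∑ b, H a b := by
    refine (abs_le_of_sq_le_sq' ?_ (by positivity)).1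
    rw [mul_pow, mul_pow, hc2]
    calc _ ≤ ((r - 1) * r ^ 2) * (k * k ^ 2) :=
          mul_le_mul hsC hsH (sq_nonneg _) (by nlinarith [sq_nonneg (∑ i, ∑ j, C i j)])
      _ = _ := by ring
  refine le_of_mul_le_mul_left ?_ hc
  nlinarith

end ConferenceHadamard

theorem rpow_three_halves_div_two_mul_sqrt_sub {r k : ℝ} (hr : 0 < r) (hk : 0 ≤ k) :
    (r * k) ^ (3 / 2 : ℝ) / 2 * √(1 - 1 / r) - (1 - 1 / r) * (r * k) =
      r * k * √((r - 1) * k) / 2 - (r - 1) * k := by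
  have hrk : 0 ≤ r * k := mul_nonneg hr.le hk
  have hpow : (r * k) ^ (3 / 2 : ℝ) = r * k * √(r * k) := by
    rw [show (3 / 2 : ℝ) = 1 + 1 / 2 by norm_num, Real.rpow_add' hrk (by norm_num),
      Real.rpow_one, Real.sqrt_eq_rpow]
  have hsqrt : √(r * k) * √(1 - 1 / r) = √((r - 1) * k) := by
    rw [← Real.sqrt_mul hrk]
    congr 1
    field_simp
  rw [hpow, mul_div_right_comm, mul_assoc, hsqrt]
  field_simp

/-- if `C` is a real symmetric conference matrix of order `r` and `H` a real
symmetric Hadamard matrix of order `k`, `n = r k`, then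
`A = (1/2)(C ⊗ H + (J_r - I_r) ⊗ J_k)` is the adjacency matrix of an `r`-partite graph `G`
(the parts being the `r` blocks of size `k`) with
`‖G‖_* ≥ (n^(3/2)/2) √(1 - 1/r) - (1 - 1/r) n`. -/
theorem exists_r_partite_graph_large_energy {r k : ℕ}
    (C : Matrix (Fin r) (Fin r) ℝ) (hCsymm : C.IsSymm)
    (hCdiag : ∀ i, C i i = 0)
    (hCoff : ∀ i j, i ≠ j → C i j = 1 ∨ C i j = -1)
    (hC : C * C = ((r : ℝ) - 1) • 1)
    (H : Matrix (Fin k) (Fin k) ℝ) (hHsymm : H.IsSymm)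
    (hHent : ∀ i j, H i j = 1 ∨ H i j = -1)
    (hH : H * H = (k : ℝ) • 1)
    (A : Matrix (Fin r × Fin k) (Fin r × Fin k) ℝ)
    (hA : A = (1 / 2 : ℝ) •
      (C ⊗ₖ H + ((Matrix.of fun _ _ => (1 : ℝ)) - (1 : Matrix (Fin r) (Fin r) ℝ)) ⊗ₖ
        (Matrix.of fun _ _ => (1 : ℝ)))) :
    (∃ (G : SimpleGraph (Fin r × Fin k)) (inst : DecidableRel G.Adj),
        G.Colorable r ∧ @SimpleGraph.adjMatrix ℝ _ G inst _ _ = A) ∧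
    traceNorm A ≥ ((r * k : ℕ) : ℝ) ^ (3 / 2 : ℝ) / 2 * Real.sqrt (1 - 1 / r) -
      (1 - 1 / r) * (r * k : ℕ) := by
  obtain rfl : A = conferenceHadamardMatrix C H := hA
  have hAdj := isAdjMatrix_conferenceHadamardMatrix hCsymm hCdiag hCoff hHsymm hHent
  refine ⟨⟨hAdj.toGraph, inferInstance, ?_, hAdj.adjMatrix_toGraph_eq⟩, ?_⟩
  · simpa using hAdj.colorable_toGraph Prod.fst fun _ _ =>
      conferenceHadamardMatrix_apply_of_fst_eq hCdiag
  rcases lt_or_ge r 2 with hr | hr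
  · interval_cases r <;> simp [traceNorm_nonneg]
  have hlower := le_traceNorm_conferenceHadamardMatrix hCsymm hCdiag
    (by rwa [Fintype.card_fin]) hHsymm (by rwa [Fintype.card_fin])
  rw [Fintype.card_fin, Fintype.card_fin] at hlower
  have hr2 : (2 : ℝ) ≤ r := by exact_mod_cast hr
  rw [ge_iff_le, Nat.cast_mul,
    rpow_three_halves_div_two_mul_sqrt_sub (by positivity) (by positivity)]
  nlinarith [mul_nonneg (sub_nonneg.mpr hr2) (Nat.cast_nonneg (α := ℝ) k)]
end

section
/- Let r ≥ 2 and suppose A is an n×n complex r-partite matrix with all entries of absolute value at most 1 and trace norm equal to n^(3/2)·sqrt(1 − 1/r). Then r divides n, each partition set has size exactly n/r, every entry outside the diagonal blocks has absolute value exactly 1, and A A* = (1 − 1/r)·n·I_n. -/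
open Matrix BigOperators Kronecker

/-!
The singular values `σᵢ` of `A` satisfy `∑ σᵢ² = ∑ |aᵢⱼ|²`, so Cauchy–Schwarz gives
`‖A‖_*² ≤ n ∑ |aᵢⱼ|²`. Since `A` vanishes on the diagonal blocks and `|aᵢⱼ| ≤ 1`,
`∑ |aᵢⱼ|² ≤ n² - ∑ₐ |Nₐ|²`, and Cauchy–Schwarz again gives `∑ₐ |Nₐ|² ≥ n² / r`. Hence
`‖A‖_*² ≤ n³ (1 - 1/r)`, and equality forces equality in every step: all parts have size `n / r`,
every entry off the diagonal blocks has modulus one, and all singular values are equal, so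
`A Aᴴ` is a scalar matrix.
-/

theorem Finset.card_mul_eq_sum_of_sq_sum_eq_card_mul_sum_sq {ι : Type*} {s : Finset ι}
    {f : ι → ℝ} (h : (∑ i ∈ s, f i) ^ 2 = (s.card : ℝ) * ∑ i ∈ s, f i ^ 2) :
    ∀ j ∈ s, (s.card : ℝ) * f j = ∑ i ∈ s, f i := by
  -- `∑ⱼ (#s fⱼ - ∑ f)² = #s (#s ∑ f² - (∑ f)²)`, which vanishes by `h`.
  have hvar : ∑ j ∈ s, ((s.card : ℝ) * f j - ∑ i ∈ s, f i) ^ 2 = 0 := by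
    have hexp : ∀ j ∈ s, ((s.card : ℝ) * f j - ∑ i ∈ s, f i) ^ 2
        = (s.card : ℝ) ^ 2 * f j ^ 2 - 2 * s.card * (∑ i ∈ s, f i) * f j
          + (∑ i ∈ s, f i) ^ 2 :=
      fun j _ => by ring
    rw [Finset.sum_congr rfl hexp, Finset.sum_add_distrib, Finset.sum_sub_distrib,
      ← Finset.mul_sum, ← Finset.mul_sum, Finset.sum_const, nsmul_eq_mul]
    linear_combination (-(s.card : ℝ)) * h
  intro j hj
  have := (Finset.sum_eq_zero_iff_of_nonneg fun i _ => sq_nonneg _).mp hvar j hj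
  linarith [pow_eq_zero_iff (n := 2) two_ne_zero |>.mp this]

namespace Matrix

section TraceNorm

variable {𝕜 : Type*} [RCLike 𝕜] {m : Type*} [Fintype m]

theorem trace_mul_conjTranspose_self (A : Matrix m m 𝕜) :
    (A * Aᴴ).trace = ∑ i, ∑ j, ((‖A i j‖ ^ 2 : ℝ) : 𝕜) := by
  simp [trace, mul_apply, RCLike.mul_conj]

variable [DecidableEq m]

theorem IsHermitian.eq_smul_one_of_eigenvalues_eq {A : Matrix m m 𝕜} (hA : A.IsHermitian)
    {c : ℝ} (h : ∀ i, hA.eigenvalues i = c) : A = (c : 𝕜) • 1 := by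
  have hdiag : diagonal (RCLike.ofReal ∘ hA.eigenvalues) = (c : 𝕜) • (1 : Matrix m m 𝕜) := by
    rw [smul_one_eq_diagonal]
    exact congrArg diagonal (funext fun i => by simp [h i])
  rw [hA.spectral_theorem, hdiag, map_smul, map_one]

theorem sum_singularValues_sq (A : Matrix m m 𝕜) :
    ∑ i, singularValues A i ^ 2 = ∑ i, ∑ j, ‖A i j‖ ^ 2 := by
  have h := (isHermitian_mul_conjTranspose_self A).trace_eq_sum_eigenvalues
  rw [trace_mul_conjTranspose_self] at h
  simp only [singularValues, Real.sq_sqrt (eigenvalues_self_mul_conjTranspose_nonneg A _)]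
  exact_mod_cast h.symm

theorem traceNorm_sq_le (A : Matrix m m 𝕜) :
    traceNorm A ^ 2 ≤ Fintype.card m * ∑ i, ∑ j, ‖A i j‖ ^ 2 := by
  rw [← sum_singularValues_sq]
  exact sq_sum_le_card_mul_sum_sq

theorem mul_conjTranspose_self_eq_smul_one_of_traceNorm_sq_eq {A : Matrix m m 𝕜}
    (h : traceNorm A ^ 2 = Fintype.card m * ∑ i, ∑ j, ‖A i j‖ ^ 2) :
    A * Aᴴ = (((traceNorm A / Fintype.card m) ^ 2 : ℝ) : 𝕜) • 1 := by
  rw [← sum_singularValues_sq] at h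
  have hσ := Finset.card_mul_eq_sum_of_sq_sum_eq_card_mul_sum_sq h
  refine (isHermitian_mul_conjTranspose_self A).eq_smul_one_of_eigenvalues_eq fun i => ?_
  have hm : (0 : ℝ) < Fintype.card m := Fintype.card_pos_iff.mpr ⟨i⟩ |> Nat.cast_pos.mpr
  have hi : singularValues A i = traceNorm A / Fintype.card m := by
    rw [eq_div_iff hm.ne', mul_comm]; exact hσ i (Finset.mem_univ i)
  rw [← hi, singularValues, Real.sq_sqrt (eigenvalues_self_mul_conjTranspose_nonneg A i)]

end TraceNorm

section Partite

variable {𝕜 ι κ : Type*} [RCLike 𝕜] [Fintype ι] [Fintype κ] [DecidableEq κ]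

theorem sum_offBlock_eq (p : ι → κ) :
    ∑ i, ∑ j, (if p i = p j then (0 : ℝ) else 1)
      = Fintype.card ι ^ 2 - ∑ a, ((Finset.univ.filter fun i => p i = a).card : ℝ) ^ 2 := by
  set c : κ → ℝ := fun a => (Finset.univ.filter fun i => p i = a).card
  have hrow : ∀ i, ∑ j, (if p i = p j then (0 : ℝ) else 1) = Fintype.card ι - c (p i) := by
    intro i
    rw [← Finset.card_univ,
      ← Finset.card_filter_add_card_filter_not (s := Finset.univ) (p · = p i)]
    simp [Finset.sum_ite, c, eq_comm]
  have hfib : ∑ i, c (p i) = ∑ a, c a ^ 2 := by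
    rw [← Finset.sum_fiberwise Finset.univ p]
    refine Finset.sum_congr rfl fun a _ => ?_
    rw [Finset.sum_congr rfl fun i hi => by rw [(Finset.mem_filter.mp hi).2], Finset.sum_const,
      nsmul_eq_mul, sq]
  simp only [hrow, Finset.sum_sub_distrib, hfib, Finset.sum_const, Finset.card_univ, nsmul_eq_mul,
    sq, c]

theorem sum_card_fiber (p : ι → κ) :
    ∑ a, ((Finset.univ.filter fun i => p i = a).card : ℝ) = Fintype.card ι := by
  exact_mod_cast (Finset.card_eq_sum_card_fiberwise fun i _ => Finset.mem_univ (p i)).symm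

theorem sq_card_le_card_mul_sum_sq_card_fiber (p : ι → κ) :
    (Fintype.card ι : ℝ) ^ 2
      ≤ Fintype.card κ * ∑ a, ((Finset.univ.filter fun i => p i = a).card : ℝ) ^ 2 := by
  rw [← sum_card_fiber p]
  exact sq_sum_le_card_mul_sum_sq

omit [Fintype ι] [Fintype κ] in
theorem sq_norm_le_offBlock {p : ι → κ} {A : Matrix ι ι 𝕜} (hbd : ∀ i j, ‖A i j‖ ≤ 1)
    (hpart : ∀ i j, p i = p j → A i j = 0) (i j : ι) :
    ‖A i j‖ ^ 2 ≤ if p i = p j then 0 else 1 := by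
  split_ifs with h
  · simp [hpart i j h]
  · exact pow_le_one₀ (norm_nonneg _) (hbd i j)

theorem sum_sq_norm_le_of_partite {p : ι → κ} {A : Matrix ι ι 𝕜} (hbd : ∀ i j, ‖A i j‖ ≤ 1)
    (hpart : ∀ i j, p i = p j → A i j = 0) :
    ∑ i, ∑ j, ‖A i j‖ ^ 2
      ≤ Fintype.card ι ^ 2 - ∑ a, ((Finset.univ.filter fun i => p i = a).card : ℝ) ^ 2 := by
  rw [← sum_offBlock_eq]
  gcongr with i _ j _
  exact sq_norm_le_offBlock hbd hpart i j

theorem card_mul_sum_sq_norm_le_of_partite {p : ι → κ} {A : Matrix ι ι 𝕜}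
    (hbd : ∀ i j, ‖A i j‖ ≤ 1) (hpart : ∀ i j, p i = p j → A i j = 0) :
    Fintype.card κ * ∑ i, ∑ j, ‖A i j‖ ^ 2 ≤ (Fintype.card κ - 1) * Fintype.card ι ^ 2 := by
  have hT := sum_sq_norm_le_of_partite hbd hpart
  have hQ := sq_card_le_card_mul_sum_sq_card_fiber p
  have hR : (0 : ℝ) ≤ Fintype.card κ := Nat.cast_nonneg _
  nlinarith

theorem sum_sq_norm_eq_and_card_mul_sum_sq_card_fiber_eq [Nonempty κ] {p : ι → κ}
    {A : Matrix ι ι 𝕜} (hbd : ∀ i j, ‖A i j‖ ≤ 1) (hpart : ∀ i j, p i = p j → A i j = 0)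
    (h : Fintype.card κ * ∑ i, ∑ j, ‖A i j‖ ^ 2 = (Fintype.card κ - 1) * Fintype.card ι ^ 2) :
    ∑ i, ∑ j, ‖A i j‖ ^ 2
        = Fintype.card ι ^ 2 - ∑ a, ((Finset.univ.filter fun i => p i = a).card : ℝ) ^ 2 ∧
      Fintype.card κ * ∑ a, ((Finset.univ.filter fun i => p i = a).card : ℝ) ^ 2
        = Fintype.card ι ^ 2 := by
  have hT := sum_sq_norm_le_of_partite hbd hpart
  have hQ := sq_card_le_card_mul_sum_sq_card_fiber p
  have hR : (0 : ℝ) < Fintype.card κ := Nat.cast_pos.mpr Fintype.card_pos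
  constructor <;> nlinarith

theorem card_mul_card_fiber_eq_of_sum_sq_norm_eq [Nonempty κ] {p : ι → κ}
    {A : Matrix ι ι 𝕜} (hbd : ∀ i j, ‖A i j‖ ≤ 1) (hpart : ∀ i j, p i = p j → A i j = 0)
    (h : Fintype.card κ * ∑ i, ∑ j, ‖A i j‖ ^ 2 = (Fintype.card κ - 1) * Fintype.card ι ^ 2)
    (a : κ) : Fintype.card κ * (Finset.univ.filter fun i => p i = a).card = Fintype.card ι := by
  have hQ := (sum_sq_norm_eq_and_card_mul_sum_sq_card_fiber_eq hbd hpart h).2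
  rw [← sum_card_fiber p, ← Finset.card_univ] at hQ
  have := Finset.card_mul_eq_sum_of_sq_sum_eq_card_mul_sum_sq hQ.symm a (Finset.mem_univ a)
  rw [Finset.card_univ, sum_card_fiber p] at this
  exact_mod_cast this

theorem norm_eq_one_of_sum_sq_norm_eq [Nonempty κ] {p : ι → κ}
    {A : Matrix ι ι 𝕜} (hbd : ∀ i j, ‖A i j‖ ≤ 1) (hpart : ∀ i j, p i = p j → A i j = 0)
    (h : Fintype.card κ * ∑ i, ∑ j, ‖A i j‖ ^ 2 = (Fintype.card κ - 1) * Fintype.card ι ^ 2)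
    {i j : ι} (hij : p i ≠ p j) : ‖A i j‖ = 1 := by
  have hT := (sum_sq_norm_eq_and_card_mul_sum_sq_card_fiber_eq hbd hpart h).1
  rw [← sum_offBlock_eq] at hT
  have hrow := (Finset.sum_eq_sum_iff_of_le fun i _ => Finset.sum_le_sum fun j _ =>
    sq_norm_le_offBlock hbd hpart i j).mp hT i (Finset.mem_univ i)
  have hij' := (Finset.sum_eq_sum_iff_of_le fun j _ =>
    sq_norm_le_offBlock hbd hpart i j).mp hrow j (Finset.mem_univ j)
  rwa [if_neg hij, pow_eq_one_iff_of_nonneg (norm_nonneg _) two_ne_zero] at hij'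

theorem sum_sq_norm_eq_of_card_mul_traceNorm_sq_eq [DecidableEq ι] [Nonempty ι] [Nonempty κ]
    {p : ι → κ} {A : Matrix ι ι 𝕜} (hbd : ∀ i j, ‖A i j‖ ≤ 1) (hpart : ∀ i j, p i = p j → A i j = 0)
    (h : Fintype.card κ * traceNorm A ^ 2 = (Fintype.card κ - 1) * Fintype.card ι ^ 3) :
    Fintype.card κ * ∑ i, ∑ j, ‖A i j‖ ^ 2 = (Fintype.card κ - 1) * Fintype.card ι ^ 2 ∧
      traceNorm A ^ 2 = Fintype.card ι * ∑ i, ∑ j, ‖A i j‖ ^ 2 := by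
  have hCS := traceNorm_sq_le A
  have hT := card_mul_sum_sq_norm_le_of_partite hbd hpart
  have hR : (0 : ℝ) < Fintype.card κ := Nat.cast_pos.mpr Fintype.card_pos
  have hN : (0 : ℝ) < Fintype.card ι := Nat.cast_pos.mpr Fintype.card_pos
  have hext : Fintype.card κ * ∑ i, ∑ j, ‖A i j‖ ^ 2
      = (Fintype.card κ - 1) * Fintype.card ι ^ 2 :=
    le_antisymm hT (le_of_mul_le_mul_left (by nlinarith) hN)
  refine ⟨hext, mul_left_cancel₀ hR.ne' ?_⟩
  linear_combination h - Fintype.card ι * hext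

end Partite

end Matrix

theorem traceNorm_extremal_structure_general {n r : ℕ}
    (A : Matrix (Fin n) (Fin n) ℂ)
    (hbd : ∀ i j, ‖A i j‖ ≤ 1)
    (p : Fin n → Fin r)
    (hpart : ∀ i j, p i = p j → A i j = 0)
    (heq : traceNorm A = (n : ℝ) ^ (3 / 2 : ℝ) * Real.sqrt (1 - 1 / r)) :
    r ∣ n ∧
    (∀ a : Fin r, (Finset.univ.filter fun i => p i = a).card = n / r) ∧
    (∀ i j, p i ≠ p j → ‖A i j‖ = 1) ∧
    A * Aᴴ = (((1 - 1 / r : ℝ) * n : ℝ) : ℂ) • 1 := by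
  rcases Nat.eq_zero_or_pos n with rfl | hn
  · exact ⟨dvd_zero r, fun _ => by simp, fun i => i.elim0, by ext i; exact i.elim0⟩
  have : Nonempty (Fin n) := ⟨⟨0, hn⟩⟩
  have : Nonempty (Fin r) := ⟨p ⟨0, hn⟩⟩
  have hr : 0 < r := Fin.pos (p ⟨0, hn⟩)
  have hS : traceNorm A ^ 2 = n ^ 3 * (1 - 1 / r) := by
    rw [heq, mul_pow, ← Real.rpow_natCast, ← Real.rpow_mul n.cast_nonneg,
      Real.sq_sqrt (sub_nonneg.mpr (div_le_one_of_le₀ (by exact_mod_cast hr) (by positivity)))]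
    norm_num
  obtain ⟨hext, hSeq⟩ := sum_sq_norm_eq_of_card_mul_traceNorm_sq_eq hbd hpart (by
    simp only [Fintype.card_fin, hS]; field_simp)
  have hsize (a : Fin r) : r * (Finset.univ.filter fun i => p i = a).card = n := by
    simpa using card_mul_card_fiber_eq_of_sum_sq_norm_eq hbd hpart hext a
  refine ⟨Dvd.intro _ (hsize ⟨0, hr⟩),
    fun a => (Nat.div_eq_of_eq_mul_right hr (hsize a).symm).symm,
    fun i j hij => norm_eq_one_of_sum_sq_norm_eq hbd hpart hext hij, ?_⟩
  have hscalar : (traceNorm A / n) ^ 2 = (1 - 1 / r) * n := by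
    rw [div_pow, hS]; field_simp
  rw [mul_conjTranspose_self_eq_smul_one_of_traceNorm_sq_eq hSeq, Fintype.card_fin, hscalar]
  rfl -- `RCLike.ofReal` and `Complex.ofReal` agree definitionally

/-- properties of an `r`-partite matrix with maximal trace norm: `r` divides `n`,
all partition sets have size `n / r`, all entries outside the diagonal blocks have absolute
value exactly `1`, and `A Aᴴ = (1 - 1/r) n I`. -/
theorem traceNorm_extremal_structure {n r : ℕ} (hr : 2 ≤ r)
    (A : Matrix (Fin n) (Fin n) ℂ)
    (hbd : ∀ i j, ‖A i j‖ ≤ 1)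
    (p : Fin n → Fin r)
    (hpart : ∀ i j, p i = p j → A i j = 0)
    (heq : traceNorm A = (n : ℝ) ^ (3 / 2 : ℝ) * Real.sqrt (1 - 1 / r)) :
    r ∣ n ∧
    (∀ a : Fin r, (Finset.univ.filter fun i => p i = a).card = n / r) ∧
    (∀ i j, p i ≠ p j → ‖A i j‖ = 1) ∧
    A * Aᴴ = (((1 - 1 / r : ℝ) * n : ℝ) : ℂ) • 1 :=
  traceNorm_extremal_structure_general A hbd p hpart heq
end
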